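/- arXiv:2510.10001 — 8 statements merged into one kernel-verified Lean document; each statement's English description precedes it below -/
import Mathlib

section
/- Let α be any type and let r : {1,…,16} → α be a function such that no value of r is attained more than 6 times. Then {1,…,16} can be partitioned into two disjoint sets A and B with |A| = 10 and |B| = 6 such that: (i) no value of r is attained more than 4 times on A; and (ii) r takes at least 3 distinct values on B and no value of r is attained more than 2 times on B. -/
open Finset

/-- Rearrangement of sixteen indices: if no value of `r` is attained more than
6 times, the index set splits into a 10-element set `A` on which no value is
attained more than 4 times, and a 6-element set `B` on which `r` takes at least
3 distinct values, each attained at most twice. -/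
theorem rearrangement_of_indices {α : Type*} [DecidableEq α] (r : Fin 16 → α)
    (h : ∀ a : α, (Finset.univ.filter (fun i => r i = a)).card ≤ 6) :
    ∃ A B : Finset (Fin 16), Disjoint A B ∧ A ∪ B = Finset.univ ∧
      A.card = 10 ∧ B.card = 6 ∧
      (∀ a : α, (A.filter (fun i => r i = a)).card ≤ 4) ∧
      3 ≤ (B.image r).card ∧
      (∀ a : α, (B.filter (fun i => r i = a)).card ≤ 2) := by
  classical
  set f : α → Finset (Fin 16) := fun a => univ.filter (fun i => r i = a) with hf
  set V : Finset α := univ.image r with hV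
  have hmemf : ∀ (a : α) (x : Fin 16), x ∈ f a ↔ r x = a := by
    intro a x; simp [hf]
  have hsum : ∑ a ∈ V, (f a).card = 16 := by
    have := Finset.card_eq_sum_card_fiberwise (f := r) (s := (univ : Finset (Fin 16)))
      (t := V) (fun x _ => mem_image_of_mem r (mem_univ x))
    simpa [hf] using this.symm
  have hV3 : 3 ≤ V.card := by
    by_contra hlt
    push_neg at hlt
    have h16 : (16:ℕ) ≤ V.card * 6 := by
      calc (16:ℕ) = ∑ a ∈ V, (f a).card := hsum.symm
        _ ≤ V.card • 6 := Finset.sum_le_card_nsmul V _ 6 (fun a _ => h a)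
        _ = V.card * 6 := by simp
    omega
  have hVne : V.Nonempty := card_pos.mp (by omega)
  obtain ⟨a1, ha1V, ha1max⟩ := Finset.exists_max_image V (fun a => (f a).card) hVne
  have hV2 : (V.erase a1).Nonempty := by
    rw [← card_pos, card_erase_of_mem ha1V]; omega
  obtain ⟨a2, ha2V', ha2max⟩ := Finset.exists_max_image _ (fun a => (f a).card) hV2
  have hV1 : ((V.erase a1).erase a2).Nonempty := by
    rw [← card_pos, card_erase_of_mem ha2V', card_erase_of_mem ha1V]; omega
  obtain ⟨a3, ha3V', ha3max⟩ := Finset.exists_max_image _ (fun a => (f a).card) hV1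
  have ha2V : a2 ∈ V := (mem_erase.mp ha2V').2
  have h21 : a2 ≠ a1 := (mem_erase.mp ha2V').1
  have h32 : a3 ≠ a2 := (mem_erase.mp ha3V').1
  have ha3V'' : a3 ∈ V.erase a1 := (mem_erase.mp ha3V').2
  have h31 : a3 ≠ a1 := (mem_erase.mp ha3V'').1
  have ha3V : a3 ∈ V := (mem_erase.mp ha3V'').2
  -- cardinalities
  have hn1 : (f a1).card ≤ 6 := h a1
  have hn21 : (f a2).card ≤ (f a1).card := ha1max a2 ha2V
  have hn32 : (f a3).card ≤ (f a2).card := ha2max a3 ha3V''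
  have hfib : ∀ a ∈ V, 1 ≤ (f a).card := by
    intro a ha
    obtain ⟨x, _, hx⟩ := mem_image.mp ha
    exact card_pos.mpr ⟨x, (hmemf a x).mpr hx⟩
  have hfib3 : 1 ≤ (f a3).card := hfib a3 ha3V
  have hfib2 : 1 ≤ (f a2).card := le_trans hfib3 hn32
  have hfib1 : 1 ≤ (f a1).card := le_trans hfib2 hn21
  have hnotV : ∀ a, a ∉ V → f a = ∅ := by
    intro a haV
    ext x
    simp only [notMem_empty, iff_false]
    intro hx
    exact haV (hV ▸ ((hmemf a x).mp hx) ▸ mem_image_of_mem r (mem_univ x))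
  have hother : ∀ a, a ≠ a1 → a ≠ a2 → a ≠ a3 → (f a).card ≤ (f a3).card := by
    intro a h1 h2 h3
    by_cases haV : a ∈ V
    · exact ha3max a (by simp [mem_erase, h1, h2, haV])
    · simp [hnotV a haV]
  have hdisj : ∀ a b : α, a ≠ b → Disjoint (f a) (f b) := by
    intro a b hab
    refine disjoint_left.mpr ?_
    intro x hxa hxb
    exact hab (((hmemf a x).mp hxa).symm.trans ((hmemf b x).mp hxb))
  have hsum4 : ∀ a, a ∈ V → a ≠ a1 → a ≠ a2 → a ≠ a3 →
      (f a1).card + (f a2).card + (f a3).card + (f a).card ≤ 16 := by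
    intro a haV h1 h2 h3
    have hd3 : Disjoint (f a1 ∪ f a2) (f a3) :=
      disjoint_union_left.mpr ⟨hdisj _ _ h31.symm, hdisj _ _ h32.symm⟩
    have hda : Disjoint (f a1 ∪ f a2 ∪ f a3) (f a) :=
      disjoint_union_left.mpr ⟨disjoint_union_left.mpr
        ⟨hdisj _ _ (Ne.symm h1), hdisj _ _ (Ne.symm h2)⟩, hdisj _ _ (Ne.symm h3)⟩
    have hcardu : (f a1 ∪ f a2 ∪ f a3 ∪ f a).card
        = (f a1).card + (f a2).card + (f a3).card + (f a).card := by
      rw [card_union_of_disjoint hda, card_union_of_disjoint hd3,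
        card_union_of_disjoint (hdisj _ _ h21.symm)]
    have hle : (f a1 ∪ f a2 ∪ f a3 ∪ f a).card ≤ 16 := by
      have := card_le_card (subset_univ (f a1 ∪ f a2 ∪ f a3 ∪ f a))
      simpa using this
    omega
  have hle4 : ∀ a, a ≠ a1 → a ≠ a2 → a ≠ a3 → (f a).card ≤ 4 := by
    intro a h1 h2 h3
    by_cases haV : a ∈ V
    · have h4 := hsum4 a haV h1 h2 h3
      have h5 := hother a h1 h2 h3
      omega
    · simp [hnotV a haV]
  -- choose subsets
  obtain ⟨S1, hS1sub, hS1card⟩ :=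
    Finset.exists_subset_card_eq (min_le_right 2 (f a1).card)
  obtain ⟨S2, hS2sub, hS2card⟩ :=
    Finset.exists_subset_card_eq (min_le_right 2 (f a2).card)
  obtain ⟨S3, hS3sub, hS3card⟩ :=
    Finset.exists_subset_card_eq (min_le_right 2 (f a3).card)
  set K : Finset (Fin 16) := univ \ (f a1 ∪ f a2 ∪ f a3) with hK
  have hUdisj : Disjoint (f a1 ∪ f a2) (f a3) :=
    disjoint_union_left.mpr ⟨hdisj _ _ h31.symm, hdisj _ _ h32.symm⟩
  have hUcard : (f a1 ∪ f a2 ∪ f a3).card = (f a1).card + (f a2).card + (f a3).card := by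
    rw [card_union_of_disjoint hUdisj, card_union_of_disjoint (hdisj _ _ h21.symm)]
  have hUle : (f a1 ∪ f a2 ∪ f a3).card ≤ 16 := by
    have := card_le_card (subset_univ (f a1 ∪ f a2 ∪ f a3))
    simpa using this
  have hKcard : K.card = 16 - ((f a1).card + (f a2).card + (f a3).card) := by
    rw [hK, card_sdiff_of_subset (subset_univ _), hUcard]
    simp
  set d : ℕ := 6 - (min 2 (f a1).card + min 2 (f a2).card + min 2 (f a3).card) with hd
  have hdK : d ≤ K.card := by
    rw [hKcard, hd]
    omega
  obtain ⟨W, hWsub, hWcard⟩ := Finset.exists_subset_card_eq hdK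
  -- properties of W
  have hWval : ∀ x ∈ W, r x ≠ a1 ∧ r x ≠ a2 ∧ r x ≠ a3 := by
    intro x hx
    have hx' := hWsub hx
    rw [hK, mem_sdiff] at hx'
    have := hx'.2
    simp only [mem_union] at this
    push_neg at this
    exact ⟨fun hr => this.1.1 ((hmemf a1 x).mpr hr),
           fun hr => this.1.2 ((hmemf a2 x).mpr hr),
           fun hr => this.2 ((hmemf a3 x).mpr hr)⟩
  set B : Finset (Fin 16) := S1 ∪ S2 ∪ S3 ∪ W with hB
  -- disjointness of the pieces
  have hd12 : Disjoint S1 S2 := (hdisj _ _ h21.symm).mono hS1sub hS2sub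
  have hd13 : Disjoint S1 S3 := (hdisj _ _ h31.symm).mono hS1sub hS3sub
  have hd23 : Disjoint S2 S3 := (hdisj _ _ h32.symm).mono hS2sub hS3sub
  have hdKU : Disjoint K (f a1 ∪ f a2 ∪ f a3) := sdiff_disjoint
  have hdW1 : Disjoint S1 W :=
    (hdKU.symm).mono (hS1sub.trans (subset_union_left.trans subset_union_left)) hWsub
  have hdW2 : Disjoint S2 W :=
    (hdKU.symm).mono (hS2sub.trans (subset_union_right.trans subset_union_left)) hWsub
  have hdW3 : Disjoint S3 W := (hdKU.symm).mono (hS3sub.trans subset_union_right) hWsub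
  have hBcard : B.card = 6 := by
    rw [hB, card_union_of_disjoint (by
        exact disjoint_union_left.mpr ⟨disjoint_union_left.mpr ⟨hdW1, hdW2⟩, hdW3⟩),
      card_union_of_disjoint (disjoint_union_left.mpr ⟨hd13, hd23⟩),
      card_union_of_disjoint hd12, hS1card, hS2card, hS3card, hWcard, hd]
    omega
  have hS1val : ∀ x ∈ S1, r x = a1 := fun x hx => (hmemf a1 x).mp (hS1sub hx)
  have hS2val : ∀ x ∈ S2, r x = a2 := fun x hx => (hmemf a2 x).mp (hS2sub hx)
  have hS3val : ∀ x ∈ S3, r x = a3 := fun x hx => (hmemf a3 x).mp (hS3sub hx)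
  -- per-value counts on B
  have hBfilter : ∀ a : α, (B.filter (fun i => r i = a)).card ≤ 2 := by
    intro a
    rw [hB, filter_union, filter_union, filter_union]
    by_cases h1 : a = a1
    · subst h1
      rw [filter_true_of_mem hS1val,
        filter_false_of_mem (fun x hx => by rw [hS2val x hx]; exact h21),
        filter_false_of_mem (fun x hx => by rw [hS3val x hx]; exact h31),
        filter_false_of_mem (fun x hx => (hWval x hx).1)]
      simp [hS1card, min_le_left]
    by_cases h2 : a = a2
    · subst h2
      rw [filter_false_of_mem (fun x hx => by rw [hS1val x hx]; exact h21.symm),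
        filter_true_of_mem hS2val,
        filter_false_of_mem (fun x hx => by rw [hS3val x hx]; exact h32),
        filter_false_of_mem (fun x hx => (hWval x hx).2.1)]
      simp [hS2card, min_le_left]
    by_cases h3 : a = a3
    · subst h3
      rw [filter_false_of_mem (fun x hx => by rw [hS1val x hx]; exact h31.symm),
        filter_false_of_mem (fun x hx => by rw [hS2val x hx]; exact h32.symm),
        filter_true_of_mem hS3val,
        filter_false_of_mem (fun x hx => (hWval x hx).2.2)]
      simp [hS3card, min_le_left]
    · rw [filter_false_of_mem (fun x hx => by rw [hS1val x hx]; exact fun e => h1 e.symm),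
        filter_false_of_mem (fun x hx => by rw [hS2val x hx]; exact fun e => h2 e.symm),
        filter_false_of_mem (fun x hx => by rw [hS3val x hx]; exact fun e => h3 e.symm)]
      simp only [empty_union]
      have hc1 : (W.filter (fun i => r i = a)).card ≤ (f a).card := by
        apply card_le_card
        intro x hx
        exact (hmemf a x).mpr (mem_filter.mp hx).2
      have hc2 : (W.filter (fun i => r i = a)).card ≤ d := by
        rw [← hWcard]; exact card_le_card (filter_subset _ _)
      have hc3 := hother a h1 h2 h3
      omega
  -- image of B has at least 3 values
  have himg : 3 ≤ (B.image r).card := by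
    have hsub : ({a1, a2, a3} : Finset α) ⊆ B.image r := by
      intro x hx
      simp only [mem_insert, mem_singleton] at hx
      rcases hx with rfl|rfl|rfl
      · obtain ⟨y, hy⟩ := card_pos.mp (show 0 < S1.card by rw [hS1card]; omega)
        have hyB : y ∈ B := by
          rw [hB]; exact mem_union_left _ (mem_union_left _ (mem_union_left _ hy))
        exact mem_image.mpr ⟨y, hyB, hS1val y hy⟩
      · obtain ⟨y, hy⟩ := card_pos.mp (show 0 < S2.card by rw [hS2card]; omega)
        have hyB : y ∈ B := by
          rw [hB]; exact mem_union_left _ (mem_union_left _ (mem_union_right _ hy))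
        exact mem_image.mpr ⟨y, hyB, hS2val y hy⟩
      · obtain ⟨y, hy⟩ := card_pos.mp (show 0 < S3.card by rw [hS3card]; omega)
        have hyB : y ∈ B := by
          rw [hB]; exact mem_union_left _ (mem_union_right _ hy)
        exact mem_image.mpr ⟨y, hyB, hS3val y hy⟩
    have h3card : ({a1, a2, a3} : Finset α).card = 3 := by
      rw [card_insert_of_notMem (by simp [h21.symm, h31.symm]),
        card_insert_of_notMem (by simp [h32.symm]), card_singleton]
    exact h3card ▸ card_le_card hsub
  -- the complement A
  have hAunion : univ \ B ∪ B = univ := sdiff_union_of_subset (subset_univ B)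
  refine ⟨univ \ B, B, sdiff_disjoint, hAunion, ?_, hBcard, ?_, himg, hBfilter⟩
  · rw [card_sdiff_of_subset (subset_univ B), hBcard]
    simp
  · intro a
    have hAf : (univ \ B).filter (fun i => r i = a) = f a \ B := by
      ext x
      rw [mem_filter, mem_sdiff, mem_sdiff, hmemf]
      simp only [mem_univ, true_and]
      exact and_comm
    rw [hAf]
    by_cases h1 : a = a1
    · rw [h1]
      have hkey := Finset.card_inter_add_card_sdiff (f a1) B
      have hsub : S1 ⊆ f a1 ∩ B := subset_inter hS1sub
        (by rw [hB]; exact (subset_union_left.trans subset_union_left).trans subset_union_left)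
      have := card_le_card hsub
      rw [hS1card] at this
      omega
    by_cases h2 : a = a2
    · rw [h2]
      have hkey := Finset.card_inter_add_card_sdiff (f a2) B
      have hsub : S2 ⊆ f a2 ∩ B := subset_inter hS2sub
        (by rw [hB]; exact (subset_union_right.trans subset_union_left).trans subset_union_left)
      have := card_le_card hsub
      rw [hS2card] at this
      omega
    by_cases h3 : a = a3
    · rw [h3]
      have hkey := Finset.card_inter_add_card_sdiff (f a3) B
      have hsub : S3 ⊆ f a3 ∩ B := subset_inter hS3sub
        (by rw [hB]; exact subset_union_right.trans subset_union_left)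
      have := card_le_card hsub
      rw [hS3card] at this
      omega
    · have := hle4 a h1 h2 h3
      have hle : (f a \ B).card ≤ (f a).card := card_le_card (sdiff_subset)
      omega
end

section
/- There exists a constant C ≥ 1 with the following property. Let M ≥ 1 and let c_1,…,c_12, d_1,…,d_12 be integers with |c_i| ≤ M and |d_i| ≤ M for all i. Suppose c_{11}d_{12} − c_{12}d_{11} ≠ 0 and that there exist indices i, j, k ∈ {1,…,10} whose columns are pairwise non-proportional, i.e. c_id_j − c_jd_i, c_id_k − c_kd_i and c_jd_k − c_kd_j are all nonzero. Then there exist real numbers η_1,…,η_12 with c_1η_1 + ⋯ + c_12η_12 = 0, d_1η_1 + ⋯ + d_12η_12 = 0, with 1 ≤ |η_i| ≤ 2 for 1 ≤ i ≤ 10 and 1/(C·M²) ≤ |η_i| ≤ C·M² for i = 11, 12. -/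
section Aux

lemma stepB' (cc dd S u : ℝ) (hd : 1 ≤ |dd|) :
    ∃ v : ℝ, (v = 1 ∨ v = 3/2 ∨ v = 2) ∧ 1/8 ≤ |cc*u + dd*v + S| := by
  by_contra h
  push_neg at h
  have h1 := h 1 (Or.inl rfl)
  have h2 := h (3/2) (Or.inr (Or.inl rfl))
  have hd' : dd ≤ -1 ∨ 1 ≤ dd := by
    rcases abs_cases dd with ⟨e, _⟩ | ⟨e, _⟩
    · right; linarith
    · left; linarith
  rw [abs_lt] at h1 h2
  rcases hd' with hd' | hd' <;> linarith

set_option maxHeartbeats 2000000 in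
lemma stepA' (a b R : ℝ) (ha : 1 ≤ |a|) :
    ∃ u : ℝ, 1 ≤ u ∧ u ≤ 2 ∧
      ∀ v : ℝ, (v = 1 ∨ v = 3/2 ∨ v = 2) → 1/8 ≤ |a*u + b*v + R| := by
  by_contra h
  push_neg at h
  obtain ⟨v1, hv1, h1⟩ := h 1 (by norm_num) (by norm_num)
  obtain ⟨v2, hv2, h2⟩ := h (4/3) (by norm_num) (by norm_num)
  obtain ⟨v3, hv3, h3⟩ := h (5/3) (by norm_num) (by norm_num)
  obtain ⟨v4, hv4, h4⟩ := h 2 (by norm_num) (by norm_num)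
  have ha' : a ≤ -1 ∨ 1 ≤ a := by
    rcases abs_cases a with ⟨e, _⟩ | ⟨e, _⟩
    · right; linarith
    · left; linarith
  rw [abs_lt] at h1 h2 h3 h4
  rcases hv1 with rfl | rfl | rfl <;> rcases hv2 with rfl | rfl | rfl <;>
    rcases hv3 with rfl | rfl | rfl <;> rcases hv4 with rfl | rfl | rfl <;>
    rcases ha' with ha' | ha' <;> linarith

lemma keyLemma' (a b cc dd R S : ℝ) (ha : 1 ≤ |a|) (hd : 1 ≤ |dd|) :
    ∃ u v : ℝ, 1 ≤ u ∧ u ≤ 2 ∧ 1 ≤ v ∧ v ≤ 2 ∧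
      1/8 ≤ |a*u + b*v + R| ∧ 1/8 ≤ |cc*u + dd*v + S| := by
  obtain ⟨u, hu1, hu2, hu⟩ := stepA' a b R ha
  obtain ⟨v, hv, hvS⟩ := stepB' cc dd S u hd
  refine ⟨u, v, hu1, hu2, ?_, ?_, hu v hv, hvS⟩ <;>
    rcases hv with rfl | rfl | rfl <;> norm_num

lemma pairNonzero' (c11 d11 ci di cj dj : ℤ) (h : ¬(c11 = 0 ∧ d11 = 0))
    (hdet : ci * dj - cj * di ≠ 0) :
    c11 * di - d11 * ci ≠ 0 ∨ c11 * dj - d11 * cj ≠ 0 := by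
  by_contra hc
  push_neg at hc
  obtain ⟨h1, h2⟩ := hc
  apply h
  have e1 : c11 * di = d11 * ci := by linarith
  have e2 : c11 * dj = d11 * cj := by linarith
  constructor
  · by_contra hc11
    apply hdet
    have : c11 * (ci * dj - cj * di) = 0 := by linear_combination ci * e2 - cj * e1
    rcases mul_eq_zero.mp this with h | h
    · exact absurd h hc11
    · exact h
  · by_contra hd11
    apply hdet
    have : d11 * (ci * dj - cj * di) = 0 := by linear_combination di * e2 - dj * e1
    rcases mul_eq_zero.mp this with h | h
    · exact absurd h hd11
    · exact h

lemma pick' {α : Type*} [DecidableEq α] {P Q : α → Prop} {p1 q1 q2 : α}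
    (hq : q1 ≠ q2) (hP1 : P p1) (hQ1 : Q q1) (hQ2 : Q q2) :
    ∃ p q, p ≠ q ∧ P p ∧ Q q := by
  by_cases h : p1 = q1
  · exact ⟨p1, q2, h ▸ hq, hP1, hQ2⟩
  · exact ⟨p1, q1, h, hP1, hQ1⟩

end Aux

set_option maxHeartbeats 4000000 in
/-- Existence of a common real zero `η` of the two linear forms with all
coordinates nonzero and of controlled size. -/
theorem common_real_zero_of_linear_forms :
    ∃ C : ℝ, 1 ≤ C ∧
      ∀ (M : ℤ) (c d : Fin 12 → ℤ),
        1 ≤ M →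
        (∀ i, |c i| ≤ M) → (∀ i, |d i| ≤ M) →
        c 10 * d 11 - c 11 * d 10 ≠ 0 →
        (∃ i j k : Fin 12, i.val < 10 ∧ j.val < 10 ∧ k.val < 10 ∧
          c i * d j - c j * d i ≠ 0 ∧
          c i * d k - c k * d i ≠ 0 ∧
          c j * d k - c k * d j ≠ 0) →
        ∃ η : Fin 12 → ℝ,
          (∑ i, (c i : ℝ) * η i) = 0 ∧
          (∑ i, (d i : ℝ) * η i) = 0 ∧
          (∀ i : Fin 12, i.val < 10 → 1 ≤ |η i| ∧ |η i| ≤ 2) ∧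
          (∀ i : Fin 12, 10 ≤ i.val →
            1 / (C * (M : ℝ) ^ 2) ≤ |η i| ∧ |η i| ≤ C * (M : ℝ) ^ 2) := by
  refine ⟨40, by norm_num, ?_⟩
  intro M c d hM hc hd hΔ hijk
  obtain ⟨i, j, k, hi, hj, hk, hij, hik, hjk⟩ := hijk
  obtain ⟨A, hA⟩ : ∃ A : Fin 12 → ℤ, A = fun l => c 11 * d l - d 11 * c l := ⟨_, rfl⟩
  obtain ⟨B, hB⟩ : ∃ B : Fin 12 → ℤ, B = fun l => d 10 * c l - c 10 * d l := ⟨_, rfl⟩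
  have h11 : ¬(c 11 = 0 ∧ d 11 = 0) := by
    rintro ⟨h1, h2⟩; exact hΔ (by rw [h1, h2]; ring)
  have h10 : ¬(d 10 = 0 ∧ c 10 = 0) := by
    rintro ⟨h1, h2⟩; exact hΔ (by rw [h1, h2]; ring)
  have hij' : i ≠ j := fun h => hij (by rw [h]; ring)
  have hik' : i ≠ k := fun h => hik (by rw [h]; ring)
  have hjk' : j ≠ k := fun h => hjk (by rw [h]; ring)
  have hAij : A i ≠ 0 ∨ A j ≠ 0 := by
    rw [hA]; exact pairNonzero' _ _ _ _ _ _ h11 hij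
  have hBij : B i ≠ 0 ∨ B j ≠ 0 := by
    rw [hB]
    exact pairNonzero' (d 10) (c 10) (d i) (c i) (d j) (c j) h10
      (fun h => hij (by linear_combination -h))
  have hBik : B i ≠ 0 ∨ B k ≠ 0 := by
    rw [hB]
    exact pairNonzero' (d 10) (c 10) (d i) (c i) (d k) (c k) h10
      (fun h => hik (by linear_combination -h))
  have hBjk : B j ≠ 0 ∨ B k ≠ 0 := by
    rw [hB]
    exact pairNonzero' (d 10) (c 10) (d j) (c j) (d k) (c k) h10
      (fun h => hjk (by linear_combination -h))
  have hB2 : (B i ≠ 0 ∧ B j ≠ 0) ∨ (B i ≠ 0 ∧ B k ≠ 0) ∨ (B j ≠ 0 ∧ B k ≠ 0) := by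
    tauto
  obtain ⟨p, q, hpq, ⟨hp10, hAp⟩, ⟨hq10, hBq⟩⟩ :
      ∃ p q : Fin 12, p ≠ q ∧ (p.val < 10 ∧ A p ≠ 0) ∧ (q.val < 10 ∧ B q ≠ 0) := by
    have hP : ∃ p1, (p1.val < 10 ∧ A p1 ≠ 0) := by
      rcases hAij with h | h
      · exact ⟨i, hi, h⟩
      · exact ⟨j, hj, h⟩
    obtain ⟨p1, hP1⟩ := hP
    rcases hB2 with ⟨g1, g2⟩ | ⟨g1, g2⟩ | ⟨g1, g2⟩
    · exact pick' hij' hP1 ⟨hi, g1⟩ ⟨hj, g2⟩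
    · exact pick' hik' hP1 ⟨hi, g1⟩ ⟨hk, g2⟩
    · exact pick' hjk' hP1 ⟨hj, g1⟩ ⟨hk, g2⟩
  -- the index set of the first ten coordinates
  set s : Finset (Fin 12) := Finset.univ.filter (fun l => l.val < 10) with hs
  have hps : p ∈ s := Finset.mem_filter.mpr ⟨Finset.mem_univ _, hp10⟩
  have hqs : q ∈ s.erase p :=
    Finset.mem_erase.mpr ⟨hpq.symm, Finset.mem_filter.mpr ⟨Finset.mem_univ _, hq10⟩⟩
  -- choose u, v by the key lemma
  have hApR : (1:ℝ) ≤ |(A p : ℝ)| := by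
    rw [← Int.cast_abs]; exact_mod_cast Int.one_le_abs hAp
  have hBqR : (1:ℝ) ≤ |(B q : ℝ)| := by
    rw [← Int.cast_abs]; exact_mod_cast Int.one_le_abs hBq
  obtain ⟨u, v, hu1, hu2, hv1, hv2, hNA, hNB⟩ :=
    keyLemma' (A p : ℝ) (A q : ℝ) (B p : ℝ) (B q : ℝ)
      (∑ l ∈ (s.erase p).erase q, (A l : ℝ)) (∑ l ∈ (s.erase p).erase q, (B l : ℝ))
      hApR hBqR
  obtain ⟨e, he⟩ : ∃ e : Fin 12 → ℝ,
      e = fun l => if l = p then u else if l = q then v else 1 := ⟨_, rfl⟩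
  have he1 : ∀ l, 1 ≤ e l := by
    intro l; rw [he]; dsimp only; split_ifs <;> linarith
  have he2 : ∀ l, e l ≤ 2 := by
    intro l; rw [he]; dsimp only; split_ifs <;> linarith
  set Tc : ℝ := ∑ l ∈ s, (c l : ℝ) * e l with hTc
  set Td : ℝ := ∑ l ∈ s, (d l : ℝ) * e l with hTd
  set D : ℝ := (c 10 : ℝ) * (d 11 : ℝ) - (c 11 : ℝ) * (d 10 : ℝ) with hD
  have hD0 : D ≠ 0 := by
    have : ((c 10 * d 11 - c 11 * d 10 : ℤ) : ℝ) ≠ 0 := Int.cast_ne_zero.mpr hΔ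
    push_cast at this
    exact this
  set x : ℝ := ((c 11 : ℝ) * Td - (d 11 : ℝ) * Tc) / D with hx
  set y : ℝ := ((d 10 : ℝ) * Tc - (c 10 : ℝ) * Td) / D with hy
  -- the split of the full sum
  have hsum : ∀ f : Fin 12 → ℝ, ∑ l, f l = (∑ l ∈ s, f l) + f 10 + f 11 := by
    intro f
    have h2 : Finset.univ.filter (fun l : Fin 12 => ¬ l.val < 10) = {10, 11} := by decide
    rw [← Finset.sum_filter_add_sum_filter_not Finset.univ (fun l => l.val < 10) f,
      ← hs, h2, Finset.sum_pair (by decide)]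
    ring
  -- the expression of the Cramer numerators through u, v
  have hsplit : ∀ f : Fin 12 → ℝ,
      ∑ l ∈ s, f l = f p + f q + ∑ l ∈ (s.erase p).erase q, f l := by
    intro f
    rw [← Finset.add_sum_erase s f hps, ← Finset.add_sum_erase (s.erase p) f hqs]
    ring
  have hrest : ∀ l ∈ (s.erase p).erase q, e l = 1 := by
    intro l hl
    have h1 : l ≠ q := (Finset.mem_erase.mp hl).1
    have h2 : l ≠ p := (Finset.mem_erase.mp (Finset.mem_erase.mp hl).2).1
    rw [he]; simp [h1, h2]
  have hep : e p = u := by rw [he]; simp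
  have heq : e q = v := by rw [he]; simp [hpq.symm]
  have hNc : (c 11 : ℝ) * Td - (d 11 : ℝ) * Tc
      = (A p : ℝ) * u + (A q : ℝ) * v + ∑ l ∈ (s.erase p).erase q, (A l : ℝ) := by
    have e1 : (c 11 : ℝ) * Td - (d 11 : ℝ) * Tc = ∑ l ∈ s, (A l : ℝ) * e l := by
      rw [hTc, hTd, Finset.mul_sum, Finset.mul_sum, ← Finset.sum_sub_distrib]
      exact Finset.sum_congr rfl fun l _ => by rw [hA]; push_cast; ring
    rw [e1, hsplit (fun l => (A l : ℝ) * e l)]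
    rw [hep, heq, Finset.sum_congr rfl (fun l hl => by rw [hrest l hl, mul_one])]
  have hNd : (d 10 : ℝ) * Tc - (c 10 : ℝ) * Td
      = (B p : ℝ) * u + (B q : ℝ) * v + ∑ l ∈ (s.erase p).erase q, (B l : ℝ) := by
    have e1 : (d 10 : ℝ) * Tc - (c 10 : ℝ) * Td = ∑ l ∈ s, (B l : ℝ) * e l := by
      rw [hTc, hTd, Finset.mul_sum, Finset.mul_sum, ← Finset.sum_sub_distrib]
      exact Finset.sum_congr rfl fun l _ => by rw [hB]; push_cast; ring
    rw [e1, hsplit (fun l => (B l : ℝ) * e l)]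
    rw [hep, heq, Finset.sum_congr rfl (fun l hl => by rw [hrest l hl, mul_one])]
  have hNc8 : 1/8 ≤ |(c 11 : ℝ) * Td - (d 11 : ℝ) * Tc| := by rw [hNc]; exact hNA
  have hNd8 : 1/8 ≤ |(d 10 : ℝ) * Tc - (c 10 : ℝ) * Td| := by rw [hNd]; exact hNB
  -- size bounds
  have hM1 : (1:ℝ) ≤ (M:ℝ) := by exact_mod_cast hM
  have hMsq : (1:ℝ) ≤ (M:ℝ)^2 := by nlinarith
  have hMZ : (0:ℤ) ≤ M := by linarith
  have habsprod : ∀ a b : Fin 12, |(c a : ℝ) * (d b : ℝ)| ≤ (M:ℝ) * (M:ℝ) := by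
    intro a b
    rw [abs_mul]
    have h1 : |(c a : ℝ)| ≤ (M:ℝ) := by rw [← Int.cast_abs]; exact_mod_cast hc a
    have h2 : |(d b : ℝ)| ≤ (M:ℝ) := by rw [← Int.cast_abs]; exact_mod_cast hd b
    exact mul_le_mul h1 h2 (abs_nonneg _) (by linarith)
  have hD1 : (1:ℝ) ≤ |D| := by
    rw [hD]
    have h0 : ((c 10 * d 11 - c 11 * d 10 : ℤ) : ℝ) =
        (c 10 : ℝ) * (d 11 : ℝ) - (c 11 : ℝ) * (d 10 : ℝ) := by push_cast; ring
    rw [← h0, ← Int.cast_abs]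
    exact_mod_cast Int.one_le_abs hΔ
  have hD2 : |D| ≤ 2 * (M:ℝ)^2 := by
    rw [hD]
    calc |(c 10 : ℝ) * (d 11 : ℝ) - (c 11 : ℝ) * (d 10 : ℝ)|
        ≤ |(c 10 : ℝ) * (d 11 : ℝ)| + |(c 11 : ℝ) * (d 10 : ℝ)| := abs_sub _ _
      _ ≤ (M:ℝ) * (M:ℝ) + (M:ℝ) * (M:ℝ) := add_le_add (habsprod _ _) (habsprod _ _)
      _ = 2 * (M:ℝ)^2 := by ring
  have hAle : ∀ l, |(A l : ℝ)| ≤ 2 * (M:ℝ)^2 := by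
    intro l
    rw [hA]
    calc |((c 11 * d l - d 11 * c l : ℤ) : ℝ)|
        = |(c 11 : ℝ) * (d l : ℝ) - (c l : ℝ) * (d 11 : ℝ)| := by push_cast; ring_nf
      _ ≤ |(c 11 : ℝ) * (d l : ℝ)| + |(c l : ℝ) * (d 11 : ℝ)| := abs_sub _ _
      _ ≤ (M:ℝ) * (M:ℝ) + (M:ℝ) * (M:ℝ) := add_le_add (habsprod _ _) (habsprod _ _)
      _ = 2 * (M:ℝ)^2 := by ring
  have hBle : ∀ l, |(B l : ℝ)| ≤ 2 * (M:ℝ)^2 := by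
    intro l
    rw [hB]
    calc |((d 10 * c l - c 10 * d l : ℤ) : ℝ)|
        = |(c l : ℝ) * (d 10 : ℝ) - (c 10 : ℝ) * (d l : ℝ)| := by push_cast; ring_nf
      _ ≤ |(c l : ℝ) * (d 10 : ℝ)| + |(c 10 : ℝ) * (d l : ℝ)| := abs_sub _ _
      _ ≤ (M:ℝ) * (M:ℝ) + (M:ℝ) * (M:ℝ) := add_le_add (habsprod _ _) (habsprod _ _)
      _ = 2 * (M:ℝ)^2 := by ring
  have hcard : s.card = 10 := by rw [hs]; decide
  have hboundsum : ∀ F : Fin 12 → ℤ, (∀ l, |(F l : ℝ)| ≤ 2 * (M:ℝ)^2) →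
      |∑ l ∈ s, (F l : ℝ) * e l| ≤ 40 * (M:ℝ)^2 := by
    intro F hF
    calc |∑ l ∈ s, (F l : ℝ) * e l| ≤ ∑ l ∈ s, |(F l : ℝ) * e l| :=
          Finset.abs_sum_le_sum_abs _ _
      _ ≤ ∑ l ∈ s, 4 * (M:ℝ)^2 := by
          apply Finset.sum_le_sum
          intro l _
          rw [abs_mul]
          have hel : |e l| ≤ 2 := by
            rw [abs_of_nonneg (by linarith [he1 l])]; exact he2 l
          calc |(F l : ℝ)| * |e l| ≤ (2 * (M:ℝ)^2) * 2 :=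
                mul_le_mul (hF l) hel (abs_nonneg _) (by positivity)
            _ = 4 * (M:ℝ)^2 := by ring
      _ = 40 * (M:ℝ)^2 := by
          rw [Finset.sum_const, hcard, nsmul_eq_mul]; ring
  have hNcle : |(c 11 : ℝ) * Td - (d 11 : ℝ) * Tc| ≤ 40 * (M:ℝ)^2 := by
    have e1 : (c 11 : ℝ) * Td - (d 11 : ℝ) * Tc = ∑ l ∈ s, (A l : ℝ) * e l := by
      rw [hTc, hTd, Finset.mul_sum, Finset.mul_sum, ← Finset.sum_sub_distrib]
      exact Finset.sum_congr rfl fun l _ => by rw [hA]; push_cast; ring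
    rw [e1]; exact hboundsum A hAle
  have hNdle : |(d 10 : ℝ) * Tc - (c 10 : ℝ) * Td| ≤ 40 * (M:ℝ)^2 := by
    have e1 : (d 10 : ℝ) * Tc - (c 10 : ℝ) * Td = ∑ l ∈ s, (B l : ℝ) * e l := by
      rw [hTc, hTd, Finset.mul_sum, Finset.mul_sum, ← Finset.sum_sub_distrib]
      exact Finset.sum_congr rfl fun l _ => by rw [hB]; push_cast; ring
    rw [e1]; exact hboundsum B hBle
  -- bounds transfer to the quotients
  have quotBound : ∀ N : ℝ, 1/8 ≤ |N| → |N| ≤ 40 * (M:ℝ)^2 →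
      1 / (40 * (M:ℝ)^2) ≤ |N / D| ∧ |N / D| ≤ 40 * (M:ℝ)^2 := by
    intro N h1 h2
    rw [abs_div]
    have hDpos : 0 < |D| := by linarith
    constructor
    · rw [div_le_div_iff₀ (by positivity) hDpos]
      nlinarith
    · rw [div_le_iff₀ hDpos]
      nlinarith
  -- assemble η
  refine ⟨fun l => if l.val < 10 then e l else if l.val = 10 then x else y, ?_, ?_, ?_, ?_⟩
  · rw [hsum]
    have hse : (∑ l ∈ s, (c l : ℝ) * (if l.val < 10 then e l else if l.val = 10 then x else y))
        = Tc := by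
      rw [hTc]
      refine Finset.sum_congr rfl fun l hl => ?_
      have : l.val < 10 := (Finset.mem_filter.mp hl).2
      rw [if_pos this]
    rw [hse]
    have h10v : ((10 : Fin 12)).val = 10 := rfl
    have h11v : ((11 : Fin 12)).val = 11 := rfl
    simp only [h10v, h11v]
    norm_num
    rw [hx, hy]
    field_simp
    ring
  · rw [hsum]
    have hse : (∑ l ∈ s, (d l : ℝ) * (if l.val < 10 then e l else if l.val = 10 then x else y))
        = Td := by
      rw [hTd]
      refine Finset.sum_congr rfl fun l hl => ?_
      have : l.val < 10 := (Finset.mem_filter.mp hl).2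
      rw [if_pos this]
    rw [hse]
    have h10v : ((10 : Fin 12)).val = 10 := rfl
    have h11v : ((11 : Fin 12)).val = 11 := rfl
    simp only [h10v, h11v]
    norm_num
    rw [hx, hy]
    field_simp
    ring
  · intro l hl
    simp only [if_pos hl]
    rw [abs_of_nonneg (by linarith [he1 l])]
    exact ⟨he1 l, he2 l⟩
  · intro l hl
    have hl12 := l.isLt
    have : l.val = 10 ∨ l.val = 11 := by omega
    rcases this with h | h
    · simp only [h]
      rw [if_neg (by norm_num), if_pos trivial, hx]
      exact quotBound _ hNc8 hNcle
    · simp only [h]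
      rw [if_neg (by norm_num), if_neg (by norm_num), hy]
      exact quotBound _ hNd8 hNdle
end

section
/- There exists a constant C > 0 with the following property. Let M ≥ 1 and let c_1,…,c_12, d_1,…,d_12 be integers with |c_i| ≤ M, |d_i| ≤ M and (c_i,d_i) ≠ (0,0) for all i, and suppose that for every index i the number of indices j ∈ {1,…,12} with c_id_j = c_jd_i is at most 5. For (β₁, β₂) ∈ ℝ² write μ_i = c_iβ₁ + d_iβ₂. Then for every real P ≥ 2 and every real τ ≥ 0: (1) the integral of ∏_{i=1}^{12} P/(1+P³|μ_i|) over the region {(β₁,β₂) ∈ ℝ² : max(|β₁|,|β₂|) > P^{τ−3}} is at most C·P^{6−5τ}·M^{11}; (2) the integral of ∏_{i=1}^{12} P/(1+P³|μ_i|) over all of ℝ² is at most C·P⁶·M^{11}; (3) for every index i₀ ∈ {1,…,12}, the integral of ∏_{i≠i₀} P/(1+P³|μ_i|) over all of ℝ² is at most C·P⁵·M^{10}. -/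
/-!
Write `f_i = P / (1 + P³ |μ_i|) ≤ P`. For non-proportional forms `μ_a, μ_b` the substitution
`β ↦ (μ_a, μ_b)` has integer Jacobian, hence of modulus `≥ 1`, so
`∫ f_a² f_b² ≤ (∫ f²)² ≤ (π / P)²`. As every proportionality class has at most five members,
at each point some non-proportional `a, b` satisfy `∏ f_i ≤ f_a² f_b² P^(n-4)`: take `a`
maximizing `f`, `b` maximizing it outside the class of `a`, and bound one more factor by each.
Summing over the at most `144` pairs gives (2) and (3). For (1), if `max |β_i| > ρ` then two
forms with `|μ| < ρ / (2M)` are proportional by Cramer's rule, so at least seven factors are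
at most `2M / (P² ρ)`; spending five of them gives the saving `P^(-5τ)`.
-/

open MeasureTheory Real Finset

section Selection

variable {ι : Type*} [DecidableEq ι] {s : Finset ι} {f : ι → ℝ} {P : ℝ}

theorem prod_le_sq_mul_sq_mul_pow {a b k m : ι} (ha : a ∈ s) (hb : b ∈ s) (hk : k ∈ s)
    (hm : m ∈ s) (hab : a ≠ b) (hak : a ≠ k) (ham : a ≠ m) (hbk : b ≠ k) (hbm : b ≠ m)
    (hkm : k ≠ m) (h0 : ∀ i ∈ s, 0 ≤ f i) (hP : ∀ i ∈ s, f i ≤ P) (hkb : f k ≤ f b)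
    (hma : f m ≤ f a) :
    ∏ i ∈ s, f i ≤ f a ^ 2 * f b ^ 2 * P ^ (#s - 4) := by
  set u : Finset ι := {a, b, k, m}
  have hu : u ⊆ s := by simp [u, insert_subset_iff, *]
  have hu4 : #u = 4 := by simp [u, *]
  have hrest : ∏ i ∈ s \ u, f i ≤ P ^ (#s - 4) := by
    rw [← hu4, ← card_sdiff_of_subset hu, ← prod_const]
    exact prod_le_prod (fun i hi => h0 i (mem_sdiff.1 hi).1) fun i hi => hP i (mem_sdiff.1 hi).1
  have hfa := h0 a ha
  have hfb := h0 b hb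
  have hfk := h0 k hk
  have hfm := h0 m hm
  have hP0 : 0 ≤ P := hfa.trans (hP a ha)
  have hrest0 : 0 ≤ ∏ i ∈ s \ u, f i := prod_nonneg fun i hi => h0 i (mem_sdiff.1 hi).1
  have hprod_u : ∏ i ∈ u, f i = f a * f m * (f b * f k) := by
    rw [prod_insert (by simp [*]), prod_insert (by simp [*]), prod_pair hkm]
    ring
  rw [← prod_sdiff hu, hprod_u]
  calc (∏ i ∈ s \ u, f i) * (f a * f m * (f b * f k))
    _ ≤ P ^ (#s - 4) * (f a * f a * (f b * f b)) := by gcongr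
    _ = f a ^ 2 * f b ^ 2 * P ^ (#s - 4) := by ring

theorem exists_prod_le_sq_mul_sq_mul_pow (r : ι → ι → Prop) [DecidableRel r]
    (hr : ∀ i ∈ s, r i i) (hclass : ∀ i ∈ s, #(s.filter (r i)) + 2 ≤ #s) (hs : 4 ≤ #s)
    (h0 : ∀ i ∈ s, 0 ≤ f i) (hP : ∀ i ∈ s, f i ≤ P) :
    ∃ a ∈ s, ∃ b ∈ s, ¬r a b ∧ ∏ i ∈ s, f i ≤ f a ^ 2 * f b ^ 2 * P ^ (#s - 4) := by
  obtain ⟨a, ha, hamax⟩ := s.exists_max_image f (card_pos.1 (by omega))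
  have ht : 2 ≤ #(s.filter fun j => ¬r a j) := by
    have := card_filter_add_card_filter_not (s := s) (r a)
    have := hclass a ha
    omega
  obtain ⟨b, hbt, hbmax⟩ := (s.filter fun j => ¬r a j).exists_max_image f (card_pos.1 (by omega))
  obtain ⟨k, hk⟩ : ((s.filter fun j => ¬r a j).erase b).Nonempty :=
    card_pos.1 (by rw [card_erase_of_mem hbt]; omega)
  obtain ⟨hbs, hab⟩ := mem_filter.1 hbt
  obtain ⟨hbk, hkt⟩ := mem_erase.1 hk
  obtain ⟨hks, hak⟩ := mem_filter.1 hkt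
  obtain ⟨m, hm⟩ : (s \ {a, b, k}).Nonempty :=
    card_pos.1 (by
      have := le_card_sdiff {a, b, k} s
      have := card_le_three (a := a) (b := b) (c := k)
      omega)
  simp only [mem_sdiff, mem_insert, mem_singleton, not_or] at hm
  obtain ⟨hms, hma, hmb, hmk⟩ := hm
  have hne : ∀ {j}, ¬r a j → a ≠ j := fun hj h => hj (h ▸ hr a ha)
  exact ⟨a, ha, b, hbs, hab, prod_le_sq_mul_sq_mul_pow ha hbs hks hms (hne hab) (hne hak)
    (Ne.symm hma) (Ne.symm hbk) (Ne.symm hmb) (Ne.symm hmk) h0 hP (hbmax k hkt) (hamax m hms)⟩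

end Selection

section Cramer

theorem abs_le_of_mul_eq_sub {x D p q u v M : ℝ} (hD : 1 ≤ |D|) (h : x * D = p * u - q * v)
    (hp : |p| ≤ M) (hq : |q| ≤ M) : |x| ≤ M * (|u| + |v|) :=
  calc |x| ≤ |x * D| := by rw [abs_mul]; exact le_mul_of_one_le_right (abs_nonneg _) hD
    _ = |p * u - q * v| := by rw [h]
    _ ≤ |p| * |u| + |q| * |v| := by rw [← abs_mul, ← abs_mul]; exact abs_sub _ _
    _ ≤ M * |u| + M * |v| := by gcongr
    _ = M * (|u| + |v|) := by ring

theorem max_abs_le_of_one_le_abs_det {a b c d M : ℝ} (hD : 1 ≤ |a * d - b * c|) (ha : |a| ≤ M)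
    (hb : |b| ≤ M) (hc : |c| ≤ M) (hd : |d| ≤ M) (β : ℝ × ℝ) :
    max |β.1| |β.2| ≤ M * (|a * β.1 + b * β.2| + |c * β.1 + d * β.2|) :=
  max_le (abs_le_of_mul_eq_sub hD (by ring) hd hb)
    (by rw [add_comm]; exact abs_le_of_mul_eq_sub hD (by ring) ha hc)

theorem mul_eq_mul_of_abs_lt_of_lt_max_abs {a b c d : ℤ} {M ρ : ℝ} (hM : 0 < M)
    (ha : |(a : ℝ)| ≤ M) (hb : |(b : ℝ)| ≤ M) (hc : |(c : ℝ)| ≤ M) (hd : |(d : ℝ)| ≤ M)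
    {β : ℝ × ℝ} (hβ : ρ < max |β.1| |β.2|) (h₁ : |a * β.1 + b * β.2| < ρ / (2 * M))
    (h₂ : |c * β.1 + d * β.2| < ρ / (2 * M)) : a * d = c * b := by
  by_contra h
  have hD : (1 : ℝ) ≤ |(a : ℝ) * d - b * c| := by
    exact_mod_cast Int.one_le_abs (sub_ne_zero.2 (by rwa [mul_comm b]))
  have := max_abs_le_of_one_le_abs_det hD ha hb hc hd β
  have : M * (|a * β.1 + b * β.2| + |c * β.1 + d * β.2|) < ρ :=
    calc _ < M * (ρ / (2 * M) + ρ / (2 * M)) := by gcongr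
      _ = ρ := by field_simp; ring
  linarith

end Cramer

theorem Finset.card_le_of_forall_rel {ι : Type*} [Fintype ι] (r : ι → ι → Prop) [DecidableRel r]
    {t : Finset ι} {n : ℕ} (ht : ∀ i ∈ t, ∀ j ∈ t, r i j) (hn : ∀ i, #(univ.filter (r i)) ≤ n) :
    #t ≤ n := by
  rcases t.eq_empty_or_nonempty with rfl | ⟨i, hi⟩
  · simp
  · exact (card_le_card fun j hj => mem_filter.2 ⟨mem_univ j, ht i hi j hj⟩).trans (hn i)

section LinearChangeOfVariables

variable {E F : Type*} [NormedAddCommGroup E] [NormedSpace ℝ E] [MeasurableSpace E] [BorelSpace E]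
  [FiniteDimensional ℝ E] [NormedAddCommGroup F] (μ : Measure E) [μ.IsAddHaarMeasure]
  {f : E →ₗ[ℝ] E}

theorem integral_comp_linearMap [NormedSpace ℝ F] (hf : LinearMap.det f ≠ 0) (g : E → F) :
    ∫ x, g (f x) ∂μ = |(LinearMap.det f)⁻¹| • ∫ y, g y ∂μ := by
  let e := (f.equivOfDetNeZero hf).toContinuousLinearEquiv.toHomeomorph.toMeasurableEquiv
  have := integral_map_equiv (μ := μ) e g
  rw [show ⇑e = f from rfl, Measure.map_linearMap_addHaar_eq_smul_addHaar μ hf,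
    integral_smul_measure, ENNReal.toReal_ofReal (abs_nonneg _)] at this
  exact this.symm

theorem integrable_comp_linearMap_iff (hf : LinearMap.det f ≠ 0) {g : E → F} :
    Integrable (fun x => g (f x)) μ ↔ Integrable g μ := by
  let e := (f.equivOfDetNeZero hf).toContinuousLinearEquiv.toHomeomorph.toMeasurableEquiv
  have := integrable_map_equiv (μ := μ) e g
  rw [show ⇑e = f from rfl, Measure.map_linearMap_addHaar_eq_smul_addHaar μ hf,
    integrable_smul_measure (by simpa using hf) ENNReal.ofReal_ne_top] at this
  exact this.symm

end LinearChangeOfVariables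

section LinearForms

variable {a b c d : ℝ}

noncomputable def linearFormsMap (a b c d : ℝ) : (ℝ × ℝ) →ₗ[ℝ] ℝ × ℝ :=
  Matrix.toLin (Module.Basis.finTwoProd ℝ) (Module.Basis.finTwoProd ℝ) !![a, b; c, d]

theorem linearFormsMap_apply (β : ℝ × ℝ) :
    linearFormsMap a b c d β = (a * β.1 + b * β.2, c * β.1 + d * β.2) :=
  Matrix.toLin_finTwoProd_apply a b c d β

theorem det_linearFormsMap : LinearMap.det (linearFormsMap a b c d) = a * d - b * c := by
  rw [linearFormsMap, LinearMap.det_toLin, Matrix.det_fin_two_of]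

theorem integral_mul_comp_linearForms (hD : a * d - b * c ≠ 0) (g h : ℝ → ℝ) :
    ∫ β : ℝ × ℝ, g (a * β.1 + b * β.2) * h (c * β.1 + d * β.2) =
      |a * d - b * c|⁻¹ * ((∫ u, g u) * ∫ u, h u) := by
  have hdet : LinearMap.det (linearFormsMap a b c d) ≠ 0 := det_linearFormsMap ▸ hD
  have := integral_comp_linearMap volume hdet (fun p : ℝ × ℝ => g p.1 * h p.2)
  simp only [linearFormsMap_apply, det_linearFormsMap, abs_inv, smul_eq_mul] at this
  rw [this, Measure.volume_eq_prod, integral_prod_mul]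

theorem MeasureTheory.Integrable.mul_comp_linearForms (hD : a * d - b * c ≠ 0) {g h : ℝ → ℝ}
    (hg : Integrable g) (hh : Integrable h) :
    Integrable fun β : ℝ × ℝ => g (a * β.1 + b * β.2) * h (c * β.1 + d * β.2) := by
  have hdet : LinearMap.det (linearFormsMap a b c d) ≠ 0 := det_linearFormsMap ▸ hD
  have := (integrable_comp_linearMap_iff volume hdet (g := fun p : ℝ × ℝ => g p.1 * h p.2)).2
    (by rw [Measure.volume_eq_prod]; exact hg.mul_prod hh)
  simpa only [linearFormsMap_apply] using this

end LinearForms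

noncomputable def bump (P u : ℝ) : ℝ := P / (1 + P ^ 3 * |u|)

section Bump

variable {P : ℝ}

theorem bump_nonneg (hP : 0 ≤ P) (u : ℝ) : 0 ≤ bump P u := by
  unfold bump; positivity

theorem bump_le (hP : 0 ≤ P) (u : ℝ) : bump P u ≤ P :=
  div_le_self hP (le_add_of_nonneg_right (by positivity))

theorem bump_le_of_le_abs (hP : 0 < P) {δ u : ℝ} (hδ : 0 < δ) (hu : δ ≤ |u|) :
    bump P u ≤ P / (P ^ 3 * δ) := by
  unfold bump
  gcongr
  nlinarith [pow_pos hP 3]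

theorem continuous_bump (hP : 0 ≤ P) : Continuous (bump P) :=
  continuous_const.div (by fun_prop) fun u => by positivity

theorem bump_sq_le (hP : 0 ≤ P) (u : ℝ) : bump P u ^ 2 ≤ P ^ 2 * (1 + (P ^ 3 * u) ^ 2)⁻¹ := by
  rw [bump, div_pow, ← div_eq_mul_inv]
  gcongr
  have : (P ^ 3 * u) ^ 2 = (P ^ 3 * |u|) ^ 2 := by rw [mul_pow, mul_pow, sq_abs]
  nlinarith [mul_nonneg (pow_nonneg hP 3) (abs_nonneg u)]

theorem integrable_bump_sq (hP : 0 < P) : Integrable fun u => bump P u ^ 2 := by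
  refine ((integrable_inv_one_add_sq.comp_mul_left' (pow_pos hP 3).ne').const_mul (P ^ 2)).mono
    ((continuous_bump hP.le).pow 2).aestronglyMeasurable (ae_of_all _ fun u => ?_)
  rw [norm_of_nonneg (by positivity), norm_of_nonneg (by positivity)]
  exact bump_sq_le hP.le u

theorem integral_bump_sq_le (hP : 0 < P) : ∫ u, bump P u ^ 2 ≤ π / P := by
  have hbound : Integrable fun u : ℝ => P ^ 2 * (1 + (P ^ 3 * u) ^ 2)⁻¹ :=
    (integrable_inv_one_add_sq.comp_mul_left' (pow_pos hP 3).ne').const_mul _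
  calc ∫ u, bump P u ^ 2 ≤ ∫ u, P ^ 2 * (1 + (P ^ 3 * u) ^ 2)⁻¹ :=
        integral_mono (integrable_bump_sq hP) hbound (bump_sq_le hP.le)
    _ = P ^ 2 * (|(P ^ 3)⁻¹| * π) := by
        rw [integral_const_mul, Measure.integral_comp_mul_left (fun u => (1 + u ^ 2)⁻¹),
          integral_univ_inv_one_add_sq, smul_eq_mul]
    _ = π / P := by
        rw [abs_of_pos (by positivity)]
        field_simp

end Bump

section BumpPair

variable {P : ℝ} {a b c d : ℤ}

theorem integrable_bump_sq_mul_bump_sq (hP : 0 < P) (h : a * d ≠ c * b) :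
    Integrable fun β : ℝ × ℝ =>
      bump P (a * β.1 + b * β.2) ^ 2 * bump P (c * β.1 + d * β.2) ^ 2 :=
  (integrable_bump_sq hP).mul_comp_linearForms
    (by rw [mul_comm (b : ℝ)]; exact_mod_cast sub_ne_zero.2 h) (integrable_bump_sq hP)

theorem integral_bump_sq_mul_bump_sq_le (hP : 0 < P) (h : a * d ≠ c * b) :
    ∫ β : ℝ × ℝ, bump P (a * β.1 + b * β.2) ^ 2 * bump P (c * β.1 + d * β.2) ^ 2 ≤
      (π / P) ^ 2 := by
  have hD : a * d - b * c ≠ 0 := sub_ne_zero.2 (by rwa [mul_comm b])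
  have hD1 : (1 : ℝ) ≤ |(a : ℝ) * d - b * c| := by exact_mod_cast Int.one_le_abs hD
  calc _ = |(a : ℝ) * d - b * c|⁻¹ * ((∫ u, bump P u ^ 2) * ∫ u, bump P u ^ 2) :=
        integral_mul_comp_linearForms (by exact_mod_cast hD) _ _
    _ ≤ 1 * ((π / P) * (π / P)) := by
        have hI : 0 ≤ ∫ u, bump P u ^ 2 := integral_nonneg fun u => sq_nonneg _
        gcongr
        · exact inv_le_one_of_one_le₀ hD1
        all_goals exact integral_bump_sq_le hP
    _ = (π / P) ^ 2 := by ring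

end BumpPair

theorem integral_le_sum_integral_of_forall_exists_le {α ι : Type*} [MeasurableSpace α]
    {μ : Measure α} [Fintype ι] {F : α → ℝ} {g : ι → α → ℝ} (hF : 0 ≤ᵐ[μ] F)
    (hg0 : ∀ i, 0 ≤ g i) (hg : ∀ i, Integrable (g i) μ) (h : ∀ᵐ x ∂μ, ∃ i, F x ≤ g i x) :
    ∫ x, F x ∂μ ≤ ∑ i, ∫ x, g i x ∂μ := by
  rw [← integral_finsetSum _ fun i _ => hg i]
  refine integral_mono_of_nonneg hF (integrable_finsetSum _ fun i _ => hg i) ?_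
  filter_upwards [h] with x ⟨i, hi⟩
  exact hi.trans (Finset.single_le_sum (fun j _ => hg0 j x) (Finset.mem_univ i))

section LinearFormFamily

variable {ι : Type*} [Fintype ι] (c d : ι → ℤ) {P : ℝ}

theorem setIntegral_le_of_forall_le_bump_pair (hP : 0 < P) {R : Set (ℝ × ℝ)}
    (hR : MeasurableSet R) {F : ℝ × ℝ → ℝ} (hF : 0 ≤ F) {K : ℝ} (hK : 0 ≤ K)
    (h : ∀ β ∈ R, ∃ a b, c a * d b ≠ c b * d a ∧
      F β ≤ bump P (c a * β.1 + d a * β.2) ^ 2 * bump P (c b * β.1 + d b * β.2) ^ 2 * K) :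
    ∫ β in R, F β ≤ Fintype.card ι ^ 2 * K * (π / P) ^ 2 := by
  let g (p : {p : ι × ι // c p.1 * d p.2 ≠ c p.2 * d p.1}) (β : ℝ × ℝ) : ℝ :=
    bump P (c p.1.1 * β.1 + d p.1.1 * β.2) ^ 2 * bump P (c p.1.2 * β.1 + d p.1.2 * β.2) ^ 2 * K
  have hg0 : ∀ p, 0 ≤ g p := fun p β => by positivity
  have hg : ∀ p, Integrable (g p) := fun p =>
    (integrable_bump_sq_mul_bump_sq hP p.2).mul_const K
  calc ∫ β in R, F β ≤ ∑ p, ∫ β in R, g p β :=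
        integral_le_sum_integral_of_forall_exists_le (ae_of_all _ hF) hg0
          (fun p => (hg p).integrableOn) <| ae_restrict_of_forall_mem hR fun β hβ => by
            obtain ⟨a, b, hab, hβ⟩ := h β hβ
            exact ⟨⟨(a, b), hab⟩, hβ⟩
    _ ≤ ∑ _p, (π / P) ^ 2 * K := by
        refine sum_le_sum fun p _ =>
          (setIntegral_le_integral (hg p) (ae_of_all _ (hg0 p))).trans ?_
        rw [integral_mul_const]
        exact mul_le_mul_of_nonneg_right (integral_bump_sq_mul_bump_sq_le hP p.2) hK
    _ ≤ Fintype.card ι ^ 2 * K * (π / P) ^ 2 := by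
        rw [sum_const, card_univ, nsmul_eq_mul]
        have hcard : (Fintype.card {p : ι × ι // c p.1 * d p.2 ≠ c p.2 * d p.1} : ℝ) ≤
            Fintype.card ι ^ 2 := by
          exact_mod_cast (Fintype.card_subtype_le _).trans (by rw [Fintype.card_prod, sq])
        nlinarith [mul_nonneg (sq_nonneg (π / P)) hK]

theorem integral_prod_bump_le [DecidableEq ι] (hP : 0 < P) (s : Finset ι) (hs : 4 ≤ #s)
    (hclass : ∀ i ∈ s, #(s.filter fun j => c i * d j = c j * d i) + 2 ≤ #s) :
    ∫ β : ℝ × ℝ, ∏ i ∈ s, bump P (c i * β.1 + d i * β.2) ≤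
      Fintype.card ι ^ 2 * P ^ (#s - 4) * (π / P) ^ 2 := by
  rw [← setIntegral_univ]
  refine setIntegral_le_of_forall_le_bump_pair c d hP MeasurableSet.univ
    (fun β => prod_nonneg fun i _ => bump_nonneg hP.le _) (by positivity) fun β _ => ?_
  obtain ⟨a, -, b, -, hab, h⟩ := exists_prod_le_sq_mul_sq_mul_pow
    (fun i j => c i * d j = c j * d i) (fun i _ => rfl) hclass hs
    (fun i _ => bump_nonneg hP.le _) (fun i _ => bump_le hP.le _)
  exact ⟨a, b, hab, h⟩

end LinearFormFamily

section TwelveForms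

variable {c d : Fin 12 → ℤ} {M P ρ : ℝ}

theorem exists_pair_prod_bump_le_of_lt_max_abs (hM : 0 < M) (hc : ∀ i, |(c i : ℝ)| ≤ M)
    (hd : ∀ i, |(d i : ℝ)| ≤ M) (h5 : ∀ i, #(univ.filter fun j => c i * d j = c j * d i) ≤ 5)
    (hP : 0 < P) (hρ : 0 < ρ) {β : ℝ × ℝ} (hβ : ρ < max |β.1| |β.2|) :
    ∃ a b, c a * d b ≠ c b * d a ∧ ∏ i, bump P (c i * β.1 + d i * β.2) ≤
      bump P (c a * β.1 + d a * β.2) ^ 2 * bump P (c b * β.1 + d b * β.2) ^ 2 *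
        (P ^ 3 * (P / (P ^ 3 * (ρ / (2 * M)))) ^ 5) := by
  set δ := ρ / (2 * M)
  set f := fun i => bump P (c i * β.1 + d i * β.2)
  have hsmall : #(univ.filter fun i => |(c i : ℝ) * β.1 + d i * β.2| < δ) ≤ 5 :=
    card_le_of_forall_rel _ (fun i hi j hj => mul_eq_mul_of_abs_lt_of_lt_max_abs hM (hc i) (hd i)
      (hc j) (hd j) hβ (mem_filter.1 hi).2 (mem_filter.1 hj).2) h5
  obtain ⟨T, hT, hT5⟩ :=
    exists_subset_card_eq (s := univ.filter fun i => δ ≤ |(c i : ℝ) * β.1 + d i * β.2|) (n := 5)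
      (by
        have := card_filter_add_card_filter_not (s := univ)
          (fun i : Fin 12 => δ ≤ |(c i : ℝ) * β.1 + d i * β.2|)
        simp only [not_le, card_univ, Fintype.card_fin] at this
        omega)
  have hs : #(univ \ T) = 7 := by rw [card_sdiff_of_subset (subset_univ T), hT5]; rfl
  obtain ⟨a, -, b, -, hab, hprod⟩ := exists_prod_le_sq_mul_sq_mul_pow (s := univ \ T) (f := f)
    (fun i j => c i * d j = c j * d i) (fun i _ => rfl)
    (fun i _ => by
      have := (card_le_card (filter_subset_filter _ (subset_univ (univ \ T)))).trans (h5 i)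
      omega)
    (by omega) (fun i _ => bump_nonneg hP.le _) (fun i _ => bump_le hP.le _)
  have hTprod : ∏ i ∈ T, f i ≤ (P / (P ^ 3 * δ)) ^ 5 := by
    rw [← hT5, ← prod_const]
    exact prod_le_prod (fun i _ => bump_nonneg hP.le _)
      fun i hi => bump_le_of_le_abs hP (by positivity) (mem_filter.1 (hT hi)).2
  refine ⟨a, b, hab, ?_⟩
  rw [hs] at hprod
  rw [← prod_sdiff (subset_univ T)]
  calc (∏ i ∈ univ \ T, f i) * ∏ i ∈ T, f i
      ≤ f a ^ 2 * f b ^ 2 * P ^ 3 * (P / (P ^ 3 * δ)) ^ 5 :=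
        mul_le_mul hprod hTprod (prod_nonneg fun i _ => bump_nonneg hP.le _) (by positivity)
    _ = f a ^ 2 * f b ^ 2 * (P ^ 3 * (P / (P ^ 3 * δ)) ^ 5) := by ring

theorem setIntegral_prod_bump_le_of_lt_max_abs (hM : 0 < M) (hc : ∀ i, |(c i : ℝ)| ≤ M)
    (hd : ∀ i, |(d i : ℝ)| ≤ M) (h5 : ∀ i, #(univ.filter fun j => c i * d j = c j * d i) ≤ 5)
    (hP : 0 < P) (hρ : 0 < ρ) :
    ∫ β in {b : ℝ × ℝ | ρ < max |b.1| |b.2|}, ∏ i, bump P (c i * β.1 + d i * β.2) ≤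
      4608 * π ^ 2 * M ^ 5 / (P ^ 9 * ρ ^ 5) := by
  have hR : MeasurableSet {b : ℝ × ℝ | ρ < max |b.1| |b.2|} :=
    measurableSet_lt (by fun_prop) (by fun_prop)
  calc _ ≤ Fintype.card (Fin 12) ^ 2 * (P ^ 3 * (P / (P ^ 3 * (ρ / (2 * M)))) ^ 5) * (π / P) ^ 2 :=
        setIntegral_le_of_forall_le_bump_pair c d hP hR
          (fun β => prod_nonneg fun i _ => bump_nonneg hP.le _) (by positivity)
          fun β hβ => exists_pair_prod_bump_le_of_lt_max_abs hM hc hd h5 hP hρ hβ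
    _ = 4608 * π ^ 2 * M ^ 5 / (P ^ 9 * ρ ^ 5) := by
        simp only [Fintype.card_fin]
        field_simp
        ring

theorem integral_prod_bump_le_of_card_ge
    (h5 : ∀ i, #(univ.filter fun j => c i * d j = c j * d i) ≤ 5) (hP : 0 < P) (s : Finset (Fin 12)) (hs : 11 ≤ #s) :
    ∫ β : ℝ × ℝ, ∏ i ∈ s, bump P (c i * β.1 + d i * β.2) ≤ 144 * π ^ 2 * P ^ (#s - 6) := by
  calc _ ≤ Fintype.card (Fin 12) ^ 2 * P ^ (#s - 6 + 2) * (π / P) ^ 2 := by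
        rw [show #s - 6 + 2 = #s - 4 by omega]
        refine integral_prod_bump_le c d hP s (by omega) fun i _ => ?_
        have := (card_le_card (filter_subset_filter _ (subset_univ s))).trans (h5 i)
        omega
    _ = 144 * π ^ 2 * P ^ (#s - 6) := by
        simp only [Fintype.card_fin]
        field_simp
        ring

end TwelveForms

/-- Bounds for the integrals of `∏ P/(1 + P³|μ_i|)` where `μ_i = c_iβ₁ + d_iβ₂`. -/
theorem linear_forms_integral_bounds :
    ∃ C : ℝ, 0 < C ∧
      ∀ (M : ℕ) (c d : Fin 12 → ℤ),
        1 ≤ M →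
        (∀ i, (c i).natAbs ≤ M) → (∀ i, (d i).natAbs ≤ M) →
        (∀ i, ((c i, d i) : ℤ × ℤ) ≠ (0, 0)) →
        (∀ i, (Finset.univ.filter (fun j => c i * d j = c j * d i)).card ≤ 5) →
        ∀ P τ : ℝ, 2 ≤ P → 0 ≤ τ →
          ((∫ β : ℝ × ℝ in {b : ℝ × ℝ | P ^ (τ - 3) < max |b.1| |b.2|},
              ∏ i : Fin 12, P / (1 + P ^ 3 * |(c i : ℝ) * β.1 + (d i : ℝ) * β.2|))
            ≤ C * P ^ (6 - 5 * τ) * (M : ℝ) ^ 11) ∧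
          ((∫ β : ℝ × ℝ,
              ∏ i : Fin 12, P / (1 + P ^ 3 * |(c i : ℝ) * β.1 + (d i : ℝ) * β.2|))
            ≤ C * P ^ (6 : ℕ) * (M : ℝ) ^ 11) ∧
          (∀ i₀ : Fin 12,
            (∫ β : ℝ × ℝ,
                ∏ i ∈ Finset.univ.erase i₀,
                  P / (1 + P ^ 3 * |(c i : ℝ) * β.1 + (d i : ℝ) * β.2|))
              ≤ C * P ^ (5 : ℕ) * (M : ℝ) ^ 10) := by
  refine ⟨4608 * π ^ 2, by positivity, fun M c d hM hc hd _ h5 P τ hP _ => ?_⟩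
  have hP0 : 0 < P := by linarith
  have hM1 : (1 : ℝ) ≤ M := by exact_mod_cast hM
  have habs : ∀ n : ℤ, n.natAbs ≤ M → |(n : ℝ)| ≤ M := fun n hn => by
    rw [← Int.cast_abs, ← Nat.cast_natAbs]; exact_mod_cast hn
  have h144 : ∀ (n k : ℕ), 144 * π ^ 2 * P ^ n ≤ 4608 * π ^ 2 * P ^ n * (M : ℝ) ^ k := by
    intro n k
    have := one_le_pow₀ (n := k) hM1
    have : 0 < π ^ 2 * P ^ n := by positivity
    nlinarith
  refine ⟨?_, ?_, fun i₀ => ?_⟩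
  · calc _ ≤ 4608 * π ^ 2 * M ^ 5 / (P ^ 9 * (P ^ (τ - 3)) ^ 5) :=
          setIntegral_prod_bump_le_of_lt_max_abs (by positivity) (fun i => habs _ (hc i))
            (fun i => habs _ (hd i)) h5 hP0 (by positivity)
      _ = 4608 * π ^ 2 * P ^ (6 - 5 * τ) * M ^ 5 := by
          have : P ^ 9 * (P ^ (τ - 3)) ^ 5 = (P ^ (6 - 5 * τ))⁻¹ := by
            rw [← rpow_neg hP0.le, ← rpow_natCast, ← rpow_natCast, ← rpow_mul hP0.le,
              ← rpow_add hP0]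
            congr 1
            push_cast
            ring
          rw [this, div_inv_eq_mul]
          ring
      _ ≤ _ := by
          gcongr 4608 * π ^ 2 * P ^ (6 - 5 * τ) * ?_
          exact pow_le_pow_right₀ hM1 (by norm_num)
  · exact (integral_prod_bump_le_of_card_ge h5 hP0 univ (by simp)).trans (h144 _ _)
  · have := integral_prod_bump_le_of_card_ge h5 hP0 (univ.erase i₀) (by simp)
    simp only [card_erase_of_mem (mem_univ i₀), card_univ, Fintype.card_fin] at this
    exact this.trans (h144 5 10)
end

section
/- There exists a constant C > 0 such that for all real numbers η > 0, P ≥ 1 and μ ∈ ℝ, |∫ from (1/2)η^{1/3}P to 2η^{1/3}P of e(μy³) dy| ≤ C · (ηP³)^{1/3} / (1 + ηP³·|μ|). -/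
open Real

/-- `e t = exp(2πit)`. -/
noncomputable def e2pi (t : ℝ) : ℂ := Complex.exp (2 * Real.pi * Complex.I * t)

/-!
Since `d/dy e(μy³) = 6πiμy² · e(μy³)`, integrating by parts against `u = 1 / (6πiμy²)` bounds
`∫_a^b e(μy³) dy`, for `0 < a ≤ b`, by `|u a| + |u b|` plus the total variation of `u` on `[a, b]`,
that is by `1 / (3π|μ|a²)`. On `[X/2, 2X]` with `X = (ηP³)^{1/3}` this is `4X / (3π ηP³|μ|)`,
which together with the trivial bound `3X/2` gives `3X / (1 + ηP³|μ|)`.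
-/

open intervalIntegral MeasureTheory Set

lemma norm_e2pi (t : ℝ) : ‖e2pi t‖ = 1 := by
  simp [e2pi, Complex.norm_exp]

lemma norm_integral_e2pi_le (f : ℝ → ℝ) (a b : ℝ) : ‖∫ y in a..b, e2pi (f y)‖ ≤ |b - a| := by
  simpa using norm_integral_le_of_norm_le_const (C := 1) fun y _ => (norm_e2pi (f y)).le

lemma HasDerivAt.e2pi {f : ℝ → ℝ} {f' x : ℝ} (hf : HasDerivAt f f' x) :
    HasDerivAt (fun y => e2pi (f y)) (e2pi (f x) * (2 * π * Complex.I * f')) x := by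
  simpa only [_root_.e2pi] using (hf.ofReal_comp.const_mul (2 * π * Complex.I : ℂ)).cexp

theorem norm_integral_mul_deriv_le {A : Type*} [NormedRing A] [NormedAlgebra ℝ A]
    [CompleteSpace A] {a b : ℝ} (hab : a ≤ b) {u v u' v' : ℝ → A}
    (hu : ∀ x ∈ uIcc a b, HasDerivAt u (u' x) x) (hv : ∀ x ∈ uIcc a b, HasDerivAt v (v' x) x)
    (hu' : IntervalIntegrable u' volume a b) (hv' : IntervalIntegrable v' volume a b)
    (hv_le : ∀ x ∈ Icc a b, ‖v x‖ ≤ 1) :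
    ‖∫ x in a..b, u x * v' x‖ ≤ ‖u a‖ + ‖u b‖ + ∫ x in a..b, ‖u' x‖ := by
  have hv_cont : ContinuousOn v (uIcc a b) := fun x hx =>
    (hv x hx).continuousAt.continuousWithinAt
  have h_tail : ∫ x in a..b, ‖u' x * v x‖ ≤ ∫ x in a..b, ‖u' x‖ :=
    integral_mono_on hab (hu'.mul_continuousOn hv_cont).norm hu'.norm fun x hx =>
      (norm_mul_le _ _).trans (mul_le_of_le_one_right (norm_nonneg _) (hv_le x hx))
  have hva := hv_le a (left_mem_Icc.2 hab)
  have hvb := hv_le b (right_mem_Icc.2 hab)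
  rw [integral_mul_deriv_eq_deriv_mul hu hv hu' hv']
  calc ‖u b * v b - u a * v a - ∫ x in a..b, u' x * v x‖
      ≤ ‖u b‖ * ‖v b‖ + ‖u a‖ * ‖v a‖ + ∫ x in a..b, ‖u' x * v x‖ :=
        (norm_sub_le _ _).trans (add_le_add ((norm_sub_le _ _).trans
          (add_le_add (norm_mul_le _ _) (norm_mul_le _ _))) (norm_integral_le_integral_norm hab))
    _ ≤ ‖u a‖ + ‖u b‖ + ∫ x in a..b, ‖u' x‖ := by
        nlinarith [norm_nonneg (u a), norm_nonneg (u b)]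

lemma hasDerivAt_inv_sq {x : ℝ} (hx : x ≠ 0) :
    HasDerivAt (fun y : ℝ => (y ^ 2)⁻¹) (-2 / x ^ 3) x := by
  refine ((hasDerivAt_pow 2 x).inv (pow_ne_zero 2 hx)).congr_deriv ?_
  field_simp
  ring

lemma pos_of_mem_uIcc {a b x : ℝ} (ha : 0 < a) (hab : a ≤ b) (hx : x ∈ uIcc a b) : 0 < x :=
  ha.trans_le (uIcc_of_le hab ▸ hx).1

lemma integral_two_div_cube {a b : ℝ} (ha : 0 < a) (hab : a ≤ b) :
    ∫ y in a..b, 2 / y ^ 3 = (a ^ 2)⁻¹ - (b ^ 2)⁻¹ := by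
  have hpos := fun x => pos_of_mem_uIcc (x := x) ha hab
  have hderiv : ∀ x ∈ uIcc a b, HasDerivAt (fun y : ℝ => -(y ^ 2)⁻¹) (2 / x ^ 3) x :=
    fun x hx => ((hasDerivAt_inv_sq (hpos x hx).ne').neg).congr_deriv (by ring)
  have hcont : ContinuousOn (fun x : ℝ => 2 / x ^ 3) (uIcc a b) :=
    continuousOn_const.div (by fun_prop) fun x hx => pow_ne_zero 3 (hpos x hx).ne'
  rw [integral_eq_sub_of_hasDerivAt hderiv hcont.intervalIntegrable]
  ring

theorem norm_integral_e2pi_mul_cube_le {μ a b : ℝ} (hμ : μ ≠ 0) (ha : 0 < a) (hab : a ≤ b) :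
    ‖∫ y in a..b, e2pi (μ * y ^ 3)‖ ≤ 1 / (3 * π * |μ| * a ^ 2) := by
  have hpos := fun x => pos_of_mem_uIcc (x := x) ha hab
  set k : ℂ := (6 * π * Complex.I * μ)⁻¹
  have hu : ∀ x ∈ uIcc a b, HasDerivAt (fun y : ℝ => k * ((y ^ 2)⁻¹ : ℝ))
      (k * ((-2 / x ^ 3 : ℝ) : ℂ)) x := fun x hx =>
    (hasDerivAt_inv_sq (hpos x hx).ne').ofReal_comp.const_mul k
  have hv : ∀ x ∈ uIcc a b, HasDerivAt (fun y => e2pi (μ * y ^ 3))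
      (e2pi (μ * x ^ 3) * (2 * π * Complex.I * ((μ * (3 * x ^ 2) : ℝ) : ℂ))) x := fun x _ =>
    (((hasDerivAt_pow 3 x).const_mul μ).congr_deriv (by ring)).e2pi
  have hu' : ContinuousOn (fun x : ℝ => k * ((-2 / x ^ 3 : ℝ) : ℂ)) (uIcc a b) :=
    continuousOn_const.mul <| Complex.continuous_ofReal.comp_continuousOn <|
      continuousOn_const.div (by fun_prop) fun x hx => pow_ne_zero 3 (hpos x hx).ne'
  have hv' : Continuous fun x : ℝ =>
      e2pi (μ * x ^ 3) * (2 * π * Complex.I * ((μ * (3 * x ^ 2) : ℝ) : ℂ)) := by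
    simp only [e2pi]
    fun_prop
  have hintegrand : ∫ y in a..b, e2pi (μ * y ^ 3) = ∫ y in a..b, k * ((y ^ 2)⁻¹ : ℝ) *
      (e2pi (μ * y ^ 3) * (2 * π * Complex.I * ((μ * (3 * y ^ 2) : ℝ) : ℂ))) := by
    refine integral_congr fun x hx => ?_
    have hx0 : (x : ℂ) ≠ 0 := Complex.ofReal_ne_zero.2 (hpos x hx).ne'
    have hμ0 : (μ : ℂ) ≠ 0 := Complex.ofReal_ne_zero.2 hμ
    have hπ0 : (π : ℂ) ≠ 0 := Complex.ofReal_ne_zero.2 pi_ne_zero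
    simp only [k]
    push_cast
    field_simp
    ring
  have hnorm_u : ∀ y, 0 < y → ‖k * ((y ^ 2)⁻¹ : ℝ)‖ = ‖k‖ * (y ^ 2)⁻¹ := fun y hy => by
    rw [norm_mul, Complex.norm_real, Real.norm_of_nonneg (by positivity)]
  have hnorm_u' : ∫ y in a..b, ‖k * ((-2 / y ^ 3 : ℝ) : ℂ)‖ =
      ‖k‖ * ((a ^ 2)⁻¹ - (b ^ 2)⁻¹) := by
    rw [← integral_two_div_cube ha hab, ← intervalIntegral.integral_const_mul]
    refine integral_congr fun y hy => ?_
    have := hpos y hy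
    rw [norm_mul, Complex.norm_real, Real.norm_eq_abs, abs_div, abs_pow, abs_of_pos this]
    norm_num
  calc ‖∫ y in a..b, e2pi (μ * y ^ 3)‖
      ≤ ‖k‖ * (a ^ 2)⁻¹ + ‖k‖ * (b ^ 2)⁻¹ + ‖k‖ * ((a ^ 2)⁻¹ - (b ^ 2)⁻¹) := by
        rw [hintegrand, ← hnorm_u a ha, ← hnorm_u b (ha.trans_le hab), ← hnorm_u']
        exact norm_integral_mul_deriv_le hab hu hv hu'.intervalIntegrable
          (hv'.intervalIntegrable _ _) fun x _ => (norm_e2pi _).le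
    _ = 1 / (3 * π * |μ| * a ^ 2) := by
        simp only [k, norm_inv, norm_mul, Complex.norm_real, Complex.norm_I, RCLike.norm_ofNat,
          Real.norm_eq_abs, abs_of_pos pi_pos]
        field_simp
        ring

theorem norm_integral_e2pi_mul_cube_dyadic_le {X : ℝ} (hX : 0 < X) (μ : ℝ) :
    ‖∫ y in X / 2..2 * X, e2pi (μ * y ^ 3)‖ ≤ 3 * X / (1 + X ^ 3 * |μ|) := by
  have hnorm := norm_nonneg (∫ y in X / 2..2 * X, e2pi (μ * y ^ 3))
  rw [le_div_iff₀ (by positivity)]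
  by_cases hsmall : X ^ 3 * |μ| ≤ 1
  · have htrivial := norm_integral_e2pi_le (fun y => μ * y ^ 3) (X / 2) (2 * X)
    rw [abs_of_nonneg (by linarith)] at htrivial
    nlinarith
  · have hμ : μ ≠ 0 := by rintro rfl; simp at hsmall
    have hdecay : ‖∫ y in X / 2..2 * X, e2pi (μ * y ^ 3)‖ * (X ^ 3 * |μ|) ≤ 4 * X / (3 * π) :=
      calc _ ≤ 1 / (3 * π * |μ| * (X / 2) ^ 2) * (X ^ 3 * |μ|) := by
            gcongr
            exact norm_integral_e2pi_mul_cube_le hμ (half_pos hX) (by linarith)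
        _ = 4 * X / (3 * π) := by field_simp; ring
    have : 4 * X / (3 * π) ≤ 3 * X / 2 := by
      rw [div_le_div_iff₀ (by positivity) (by norm_num)]
      nlinarith [pi_gt_three]
    nlinarith

/-- Oscillatory integral bound for `∫ e(μ y³) dy` over `[(1/2)η^{1/3}P, 2η^{1/3}P]`. -/
theorem oscillatory_integral_bound :
    ∃ C : ℝ, 0 < C ∧
      ∀ (η P μ : ℝ), 0 < η → 1 ≤ P →
        ‖∫ y in (1 / 2 * η ^ ((1 : ℝ) / 3) * P)..(2 * η ^ ((1 : ℝ) / 3) * P),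
            e2pi (μ * y ^ 3)‖
          ≤ C * (η * P ^ 3) ^ ((1 : ℝ) / 3) / (1 + η * P ^ 3 * |μ|) := by
  refine ⟨3, by norm_num, fun η P μ hη hP => ?_⟩
  set X := η ^ ((1 : ℝ) / 3) * P with hX
  have hX0 : 0 < X := by positivity
  have hcube : X ^ 3 = η * P ^ 3 := by
    rw [hX, mul_pow, ← rpow_natCast (η ^ _) 3, ← rpow_mul hη.le]
    norm_num
  have hroot : (η * P ^ 3) ^ ((1 : ℝ) / 3) = X := by
    simpa [← hcube] using pow_rpow_inv_natCast hX0.le (n := 3) three_ne_zero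
  rw [hroot, ← hcube, mul_assoc, one_div_mul_eq_div, mul_assoc]
  exact norm_integral_e2pi_mul_cube_dyadic_le hX0 μ
end

section
/- There exists a constant C > 0 such that the following holds. Let p be a prime with p ≡ 1 (mod 3), and let c_1,…,c_16, d_1,…,d_16 be integers such that for every pair (λ,μ) ∈ (ℤ/pℤ)² with (λ,μ) ≠ (0,0), the number of indices i with λc_i + μd_i ≡ 0 (mod p) is at most 11. Then ρ(p) ≥ p^{14} − C·p^{13}. -/
/-!
Let `ψ` be a nontrivial additive character of `𝔽_q` and `S(a) = ∑ₓ ψ(a x³)`. Orthogonality of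
`ψ` gives `q² ρ = ∑_{(λ,μ)} ∏ᵢ S(λ cᵢ + μ dᵢ)`, and the term `(λ,μ) = 0` is `q¹⁶`.
Counting cube roots with a cubic character `χ` writes `S(a)`, `a ≠ 0`, as the sum of the Gauss
sums of `χ` and `χ²`, so `|S(a)| ≤ 2√q` while `S(0) = q`. A nonzero `(λ,μ)` kills at most `11`
of the pairs `(cᵢ,dᵢ)`, hence at most `10` of them are `0`; it kills a nonzero pair only if it lies
on one of the `16` lines `(cᵢ,dᵢ)^⊥`, so for at most `16 q` points. The error is therefore at most
`16 q · q¹¹ (2√q)⁵ + q² · q¹⁰ (2√q)⁶ = O(q¹⁵)`.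
-/

open Finset

namespace FiniteField

variable {F : Type*} [Field F] [Fintype F]

theorem exists_isPrimitiveRoot_of_dvd_card_sub_one {n : ℕ} (hn : n ∣ Fintype.card F - 1) :
    ∃ ζ : F, IsPrimitiveRoot ζ n := by
  classical
  obtain ⟨g, hg⟩ := IsCyclic.exists_generator (α := Fˣ)
  have hg_order : orderOf g = Fintype.card F - 1 := by
    rw [orderOf_eq_card_of_forall_mem_zpowers hg, Nat.card_eq_fintype_card, Fintype.card_units]
  have h := orderOf_pow_orderOf_div (orderOf_pos g).ne' (hg_order ▸ hn)
  exact ⟨_, IsPrimitiveRoot.coe_units_iff.mpr (h ▸ IsPrimitiveRoot.orderOf _)⟩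

theorem card_pow_eq_of_isPrimitiveRoot [DecidableEq F] {n : ℕ} {ζ : F} (hζ : IsPrimitiveRoot ζ n)
    (hn : 0 < n) {t : F} (ht : t ≠ 0) :
    #{x | x ^ n = t} = if ∃ s, s ^ n = t then n else 0 := by
  have : ({x | x ^ n = t} : Finset F) = (Polynomial.nthRoots n t).toFinset := by
    ext x
    simp [Polynomial.mem_nthRoots hn]
  rw [this, Multiset.toFinset_card_of_nodup (hζ.nthRoots_nodup ht)]
  convert hζ.card_nthRoots t

end FiniteField

namespace MulChar

variable {F : Type*} [Field F] [Fintype F]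

theorem apply_eq_one_iff_exists_pow_orderOf_eq {R : Type*} [CommMonoidWithZero R]
    (χ : MulChar F R) {t : F} (ht : t ≠ 0) : χ t = 1 ↔ ∃ s, s ^ orderOf χ = t := by
  constructor
  · -- `χ` is determined by its value at a generator `g`, so `χ (g ^ k) = 1` forces `χ ^ k = 1`.
    intro hχt
    obtain ⟨g, hg⟩ := IsCyclic.exists_generator (α := Fˣ)
    obtain ⟨k, hk : g ^ k = Units.mk0 t ht⟩ := mem_powers_iff_mem_zpowers.mpr (hg (Units.mk0 t ht))
    have hχk : χ ^ k = 1 := by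
      rw [eq_iff hg, pow_apply_coe, one_apply_coe, ← map_pow, ← Units.val_pow_eq_pow_val, hk]
      exact hχt
    obtain ⟨m, rfl⟩ := orderOf_dvd_of_pow_eq_one hχk
    refine ⟨((g ^ m : Fˣ) : F), ?_⟩
    rw [← Units.val_pow_eq_pow_val, ← pow_mul, mul_comm, hk, Units.val_mk0]
  · rintro ⟨s, rfl⟩
    have hs : s ≠ 0 := by rintro rfl; exact ht (zero_pow χ.orderOf_pos.ne')
    have h := pow_apply_coe χ (orderOf χ) (Units.mk0 s hs)
    rw [pow_orderOf_eq_one, one_apply_coe, Units.val_mk0] at h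
    rw [map_pow, ← h]

theorem card_pow_orderOf_eq [DecidableEq F] {R : Type*} [CommRing R] [IsDomain R]
    (χ : MulChar F R) {t : F} (ht : t ≠ 0) :
    (#{x | x ^ orderOf χ = t} : R) = ∑ j ∈ range (orderOf χ), (χ ^ j) t := by
  obtain ⟨ζ, hζ⟩ :=
    FiniteField.exists_isPrimitiveRoot_of_dvd_card_sub_one χ.orderOf_dvd_card_sub_one
  have hpow : ∀ j, (χ ^ j) t = χ t ^ j := fun j => pow_apply_coe χ j (Units.mk0 t ht)
  rw [FiniteField.card_pow_eq_of_isPrimitiveRoot hζ χ.orderOf_pos ht,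
    sum_congr rfl fun j _ => hpow j]
  by_cases hχt : χ t = 1
  · rw [if_pos ((χ.apply_eq_one_iff_exists_pow_orderOf_eq ht).mp hχt)]
    simp [hχt]
  · rw [if_neg (mt (χ.apply_eq_one_iff_exists_pow_orderOf_eq ht).mpr hχt), Nat.cast_zero]
    have hgeom := geom_sum_mul (χ t) (orderOf χ)
    rw [← hpow, pow_orderOf_eq_one, ← Units.val_mk0 ht, one_apply_coe, sub_self, mul_eq_zero,
      Units.val_mk0, sub_eq_zero] at hgeom
    exact (hgeom.resolve_right hχt).symm

end MulChar

theorem AddChar.map_sum_eq_prod {A M ι : Type*} [AddCommMonoid A] [CommMonoid M]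
    (ψ : AddChar A M) (s : Finset ι) (f : ι → A) : ψ (∑ i ∈ s, f i) = ∏ i ∈ s, ψ (f i) :=
  map_prod ψ.toMonoidHom (fun i => Multiplicative.ofAdd (f i)) s

theorem norm_gaussSum_eq_sqrt_card {F : Type*} [Field F] [Fintype F] {χ : MulChar F ℂ}
    (hχ : χ ≠ 1) {ψ : AddChar F ℂ} (hψ : ψ.IsPrimitive) :
    ‖gaussSum χ ψ‖ = √(Fintype.card F) := by
  have h := gaussSum_mul_gaussSum_eq_card hχ hψ
  rw [← star_gaussSum_eq, RCLike.star_def, Complex.mul_conj, Complex.normSq_eq_norm_sq] at h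
  rw [← Real.sqrt_sq (norm_nonneg _)]
  exact congrArg Real.sqrt (mod_cast h)

namespace DiagonalForms

theorem pow_mul_pow_sub_le_pow_mul_pow_sub {x y : ℝ} (hy : 0 ≤ y) (hyx : y ≤ x) {k K m : ℕ}
    (hkK : k ≤ K) (hKm : K ≤ m) : x ^ k * y ^ (m - k) ≤ x ^ K * y ^ (m - K) := by
  have hx : 0 ≤ x := hy.trans hyx
  calc x ^ k * y ^ (m - k) = x ^ k * y ^ (m - K) * y ^ (K - k) := by
        rw [mul_assoc, ← pow_add]; congr 2; omega
    _ ≤ x ^ k * y ^ (m - K) * x ^ (K - k) := by gcongr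
    _ = x ^ K * y ^ (m - K) := by
        rw [mul_right_comm, ← pow_add]; congr 2; omega

section MonomialSum

variable {F : Type*} [Field F] [Fintype F]

def monomialSum (ψ : AddChar F ℂ) (n : ℕ) (a : F) : ℂ := ∑ x, ψ (a * x ^ n)

@[simp]
theorem monomialSum_zero (ψ : AddChar F ℂ) (n : ℕ) : monomialSum ψ n 0 = Fintype.card F := by
  simp [monomialSum]

theorem monomialSum_eq_sum_card_mul [DecidableEq F] (ψ : AddChar F ℂ) (n : ℕ) (a : F) :
    monomialSum ψ n a = ∑ t, (#{x | x ^ n = t} : ℂ) * ψ (a * t) := by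
  rw [monomialSum, ← sum_fiberwise univ (fun x => x ^ n)]
  refine sum_congr rfl fun t _ => ?_
  rw [← nsmul_eq_mul, ← sum_const]
  exact sum_congr rfl fun x hx => by rw [(mem_filter.mp hx).2]

theorem monomialSum_orderOf_eq [DecidableEq F] (χ : MulChar F ℂ) (ψ : AddChar F ℂ) (a : F) :
    monomialSum ψ (orderOf χ) a =
      1 + ∑ j ∈ range (orderOf χ), gaussSum (χ ^ j) (ψ.mulShift a) := by
  have hterm : ∀ t, (#{x | x ^ orderOf χ = t} : ℂ) * ψ (a * t) =
      (if t = 0 then 1 else 0) + ∑ j ∈ range (orderOf χ), (χ ^ j) t * ψ (a * t) := by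
    intro t
    rcases eq_or_ne t 0 with rfl | ht
    · simp [pow_eq_zero_iff χ.orderOf_pos.ne', MulChar.map_zero, filter_eq']
    · rw [if_neg ht, zero_add, ← sum_mul, MulChar.card_pow_orderOf_eq χ ht]
  simp_rw [monomialSum_eq_sum_card_mul, hterm, sum_add_distrib, sum_ite_eq', mem_univ, if_true,
    gaussSum, AddChar.mulShift_apply]
  rw [sum_comm]

theorem norm_monomialSum_le {n : ℕ} (hn : n ∣ Fintype.card F - 1) {ψ : AddChar F ℂ}
    (hψ : ψ.IsPrimitive) {a : F} (ha : a ≠ 0) :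
    ‖monomialSum ψ n a‖ ≤ (n - 1 : ℝ) * √(Fintype.card F) := by
  classical
  have hn0 : n ≠ 0 := by
    rintro rfl
    have := Fintype.one_lt_card (α := F)
    omega
  obtain ⟨χ, rfl⟩ := MulChar.exists_mulChar_orderOf F hn (Complex.isPrimitiveRoot_exp n hn0)
  obtain ⟨m, hm⟩ := Nat.exists_eq_succ_of_ne_zero hn0
  have hψa : ψ.mulShift a ≠ 1 := hψ ha
  -- the trivial character contributes `gaussSum 1 _ = -1`, which cancels the `1`
  rw [monomialSum_orderOf_eq, hm, sum_range_succ', pow_zero, gaussSum_one_left hψa,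
    add_neg_cancel_comm_assoc]
  calc ‖∑ j ∈ range m, gaussSum (χ ^ (j + 1)) (ψ.mulShift a)‖
      ≤ ∑ j ∈ range m, ‖gaussSum (χ ^ (j + 1)) (ψ.mulShift a)‖ := norm_sum_le _ _
    _ = ∑ j ∈ range m, √(Fintype.card F) := sum_congr rfl fun j hj =>
        norm_gaussSum_eq_sqrt_card (pow_ne_one_of_lt_orderOf j.succ_ne_zero
          (hm ▸ Nat.succ_lt_succ (mem_range.mp hj))) (AddChar.IsPrimitive.of_ne_one hψa)
    _ = (m.succ - 1 : ℝ) * √(Fintype.card F) := by simp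

theorem two_mul_sqrt_card_le_card (hq : 3 ∣ Fintype.card F - 1) :
    2 * √(Fintype.card F : ℝ) ≤ Fintype.card F := by
  have hq4 : (4 : ℝ) ≤ Fintype.card F := by
    have := Fintype.one_lt_card (α := F)
    have := Nat.le_of_dvd (by omega) hq
    exact_mod_cast (by omega : 4 ≤ Fintype.card F)
  nlinarith [Real.sq_sqrt (by linarith : (0 : ℝ) ≤ Fintype.card F),
    Real.sqrt_nonneg (Fintype.card F : ℝ)]

theorem norm_prod_monomialSum_three_le {ι : Type*} [Fintype ι] [DecidableEq F]
    (hq : 3 ∣ Fintype.card F - 1) {ψ : AddChar F ℂ} (hψ : ψ.IsPrimitive) (a : ι → F) {K : ℕ}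
    (hK : #{i | a i = 0} ≤ K) (hKι : K ≤ Fintype.card ι) :
    ‖∏ i, monomialSum ψ 3 (a i)‖ ≤
      (Fintype.card F : ℝ) ^ K * (2 * √(Fintype.card F)) ^ (Fintype.card ι - K) := by
  have hterm : ∀ i, ‖monomialSum ψ 3 (a i)‖ ≤
      if a i = 0 then (Fintype.card F : ℝ) else 2 * √(Fintype.card F) := by
    intro i
    split_ifs with ha
    · simp [ha]
    · exact (norm_monomialSum_le hq hψ ha).trans_eq (by norm_num)
  have hsplit := card_filter_add_card_filter_not (s := univ) (fun i => a i = 0)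
  rw [card_univ] at hsplit
  calc ‖∏ i, monomialSum ψ 3 (a i)‖
      ≤ ∏ i, if a i = 0 then (Fintype.card F : ℝ) else 2 * √(Fintype.card F) := by
        rw [norm_prod]
        exact prod_le_prod (fun _ _ => norm_nonneg _) fun i _ => hterm i
    _ = (Fintype.card F : ℝ) ^ #{i | a i = 0} *
          (2 * √(Fintype.card F)) ^ (Fintype.card ι - #{i | a i = 0}) := by
        rw [prod_ite, prod_const, prod_const]
        congr 2
        omega
    _ ≤ _ := pow_mul_pow_sub_le_pow_mul_pow_sub (by positivity) (two_mul_sqrt_card_le_card hq)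
        hK hKι

theorem sum_addChar_mul_add_mul [DecidableEq F] {ψ : AddChar F ℂ} (hψ : ψ.IsPrimitive) (A B : F) :
    ∑ v : F × F, ψ (v.1 * A + v.2 * B) =
      if A = 0 ∧ B = 0 then (Fintype.card F : ℂ) ^ 2 else 0 := by
  simp_rw [Fintype.sum_prod_type, AddChar.map_add_eq_mul, ← sum_mul_sum,
    AddChar.sum_mulShift _ hψ]
  split_ifs <;> simp_all [sq]

theorem prod_monomialSum {ι : Type*} [Fintype ι] [DecidableEq ι] (ψ : AddChar F ℂ) (n : ℕ)
    (a : ι → F) : ∏ i, monomialSum ψ n (a i) = ∑ x : ι → F, ψ (∑ i, a i * x i ^ n) := by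
  simp_rw [monomialSum, prod_univ_sum, Fintype.piFinset_univ, AddChar.map_sum_eq_prod]

theorem card_sq_mul_card_eq_sum_prod_monomialSum [DecidableEq F] {ι : Type*} [Fintype ι]
    [DecidableEq ι] {ψ : AddChar F ℂ} (hψ : ψ.IsPrimitive) (n : ℕ) (c d : ι → F) :
    (Fintype.card F : ℂ) ^ 2 * #{x : ι → F | ∑ i, c i * x i ^ n = 0 ∧ ∑ i, d i * x i ^ n = 0} =
      ∑ v : F × F, ∏ i, monomialSum ψ n (v.1 * c i + v.2 * d i) := by
  have hlin : ∀ (v : F × F) (x : ι → F), ∑ i, (v.1 * c i + v.2 * d i) * x i ^ n =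
      v.1 * ∑ i, c i * x i ^ n + v.2 * ∑ i, d i * x i ^ n := by
    intro v x
    simp_rw [mul_sum, ← sum_add_distrib, add_mul, mul_assoc]
  simp_rw [prod_monomialSum, hlin]
  rw [sum_comm]
  simp_rw [sum_addChar_mul_add_mul hψ]
  rw [← sum_filter, sum_const, nsmul_eq_mul, mul_comm]

end MonomialSum

section Lines

variable {F : Type*} [Field F] [DecidableEq F] {ι : Type*} [Fintype ι]

theorem card_filter_mul_add_mul_eq_zero_le [Fintype F] {c d : F} (h : (c, d) ≠ 0) :
    #{v : F × F | v.1 * c + v.2 * d = 0} ≤ Fintype.card F := by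
  by_cases hc : c = 0
  · have hd : d ≠ 0 := by simp_all
    refine (card_le_card_of_injOn Prod.fst (fun _ _ => mem_univ _) ?_).trans_eq card_univ
    intro v hv w hw hvw
    simp only [coe_filter, mem_univ, true_and, Set.mem_ofPred_eq, hc, mul_zero, zero_add,
      mul_eq_zero, hd, or_false] at hv hw
    exact Prod.ext hvw (hv.trans hw.symm)
  · refine (card_le_card_of_injOn Prod.snd (fun _ _ => mem_univ _) ?_).trans_eq card_univ
    intro v hv w hw hvw
    simp only [coe_filter, mem_univ, true_and, Set.mem_ofPred_eq] at hv hw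
    refine Prod.ext (mul_right_cancel₀ hc ?_) hvw
    linear_combination hv - hw - d * hvw

theorem card_filter_exists_mul_add_mul_eq_zero_le [Fintype F] (c d : ι → F) :
    #{v : F × F | ∃ i, (c i, d i) ≠ 0 ∧ v.1 * c i + v.2 * d i = 0} ≤
      Fintype.card ι * Fintype.card F := by
  calc #{v : F × F | ∃ i, (c i, d i) ≠ 0 ∧ v.1 * c i + v.2 * d i = 0}
      ≤ #(({i | (c i, d i) ≠ 0} : Finset ι).biUnion
          fun i => {v : F × F | v.1 * c i + v.2 * d i = 0}) := by
        refine card_le_card fun v hv => ?_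
        simp only [mem_filter, mem_univ, true_and, mem_biUnion] at hv ⊢
        exact hv
    _ ≤ #({i | (c i, d i) ≠ 0} : Finset ι) * Fintype.card F :=
        card_biUnion_le_card_mul _ _ _ fun i hi =>
          card_filter_mul_add_mul_eq_zero_le (mem_filter.mp hi).2
    _ ≤ Fintype.card ι * Fintype.card F := by gcongr; exact card_filter_le _ _

theorem card_filter_eq_zero_lt [DecidableEq ι] {c d : ι → F} {r : ℕ} (hr : r < Fintype.card ι)
    (h : ∀ v : F × F, v ≠ 0 → #{i | v.1 * c i + v.2 * d i = 0} ≤ r) :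
    #{i | (c i, d i) = 0} < r := by
  obtain ⟨i₀, hi₀⟩ : ∃ i₀, (c i₀, d i₀) ≠ 0 := by
    by_contra! hcd
    simp only [Prod.mk_eq_zero] at hcd
    exact absurd (h (1, 0) (by simp)) (by simpa [hcd] using hr)
  have hv : (d i₀, -c i₀) ≠ 0 := by simpa [and_comm] using hi₀
  calc #{i | (c i, d i) = 0}
      < #(insert i₀ ({i | (c i, d i) = 0} : Finset ι)) :=
        card_lt_card (ssubset_insert (by simpa using hi₀))
    _ ≤ #{i | d i₀ * c i + -c i₀ * d i = 0} := by
        refine card_le_card (insert_subset_iff.mpr ⟨by simp [mul_comm], fun i hi => ?_⟩)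
        simp_all
    _ ≤ r := h _ hv

end Lines

section Estimate

variable {F : Type*} [Field F] [Fintype F] [DecidableEq F]

theorem norm_prod_monomialSum_le_of_ne_zero (hq : 3 ∣ Fintype.card F - 1) {ψ : AddChar F ℂ}
    (hψ : ψ.IsPrimitive) {c d : Fin 16 → F}
    (h : ∀ v : F × F, v ≠ 0 → #{i | v.1 * c i + v.2 * d i = 0} ≤ 11) {v : F × F} (hv : v ≠ 0) :
    ‖∏ i, monomialSum ψ 3 (v.1 * c i + v.2 * d i)‖ ≤
      (if ∃ i, (c i, d i) ≠ 0 ∧ v.1 * c i + v.2 * d i = 0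
        then 16 * (Fintype.card F : ℝ) ^ 14 else 0) + 64 * (Fintype.card F : ℝ) ^ 13 := by
  set q := Fintype.card F
  have hw2 : (2 * √(q : ℝ)) ^ 2 = 4 * q := by
    rw [mul_pow, Real.sq_sqrt (Nat.cast_nonneg _)]; ring
  split_ifs with hE
  · have hTv := norm_prod_monomialSum_three_le hq hψ (fun i => v.1 * c i + v.2 * d i) (h v hv)
      (by simp)
    calc _ ≤ (q : ℝ) ^ 11 * (2 * √(q : ℝ)) ^ 5 := hTv.trans_eq (by simp [q])
      _ = (q : ℝ) ^ 11 * ((2 * √(q : ℝ)) ^ 2) ^ 2 * (2 * √(q : ℝ)) := by ring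
      _ ≤ (q : ℝ) ^ 11 * (4 * q) ^ 2 * q := by rw [hw2]; gcongr; exact two_mul_sqrt_card_le_card hq
      _ ≤ 16 * (q : ℝ) ^ 14 + 64 * (q : ℝ) ^ 13 := by
        nlinarith [pow_nonneg (Nat.cast_nonneg (α := ℝ) q) 13]
  · have hsub : #{i | v.1 * c i + v.2 * d i = 0} ≤ #{i | (c i, d i) = 0} := by
      refine card_le_card fun i hi => ?_
      by_contra hi'
      exact hE ⟨i, by simpa using hi', (mem_filter.mp hi).2⟩
    have hdeg := card_filter_eq_zero_lt (by simp : 11 < Fintype.card (Fin 16)) h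
    have hTv := norm_prod_monomialSum_three_le hq hψ (fun i => v.1 * c i + v.2 * d i) (K := 10)
      (by omega) (by simp)
    calc _ ≤ (q : ℝ) ^ 10 * ((2 * √(q : ℝ)) ^ 2) ^ 3 := hTv.trans_eq (by simp [q, ← pow_mul])
      _ = 0 + 64 * (q : ℝ) ^ 13 := by rw [hw2]; ring

theorem abs_card_sq_mul_card_sub_pow_le (hq : 3 ∣ Fintype.card F - 1) (c d : Fin 16 → F)
    (h : ∀ v : F × F, v ≠ 0 → #{i | v.1 * c i + v.2 * d i = 0} ≤ 11) :
    |(Fintype.card F : ℝ) ^ 2 *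
        #{x : Fin 16 → F | ∑ i, c i * x i ^ 3 = 0 ∧ ∑ i, d i * x i ^ 3 = 0} -
      (Fintype.card F : ℝ) ^ 16| ≤ 320 * (Fintype.card F : ℝ) ^ 15 := by
  obtain ⟨ψ, hψ⟩ : ∃ ψ : AddChar F ℂ, ψ.IsPrimitive :=
    ⟨_, AddChar.FiniteField.primitiveChar_to_Complex_isPrimitive F⟩
  set q := Fintype.card F
  set N := #{x : Fin 16 → F | ∑ i, c i * x i ^ 3 = 0 ∧ ∑ i, d i * x i ^ 3 = 0}
  set T : F × F → ℂ := fun v => ∏ i, monomialSum ψ 3 (v.1 * c i + v.2 * d i)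
  set B : F × F → ℝ := fun v => (if ∃ i, (c i, d i) ≠ 0 ∧ v.1 * c i + v.2 * d i = 0
    then 16 * (q : ℝ) ^ 14 else 0) + 64 * (q : ℝ) ^ 13
  have hcount : (((q : ℝ) ^ 2 * N - (q : ℝ) ^ 16 : ℝ) : ℂ) = ∑ v ∈ univ.erase 0, T v := by
    have hid : (q : ℂ) ^ 2 * N = T 0 + ∑ v ∈ univ.erase 0, T v := by
      rw [add_sum_erase _ _ (mem_univ 0)]
      exact card_sq_mul_card_eq_sum_prod_monomialSum hψ 3 c d
    have hT0 : T 0 = (q : ℂ) ^ 16 := by simp [T, q]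
    push_cast
    rw [hid, hT0]
    ring
  calc |(q : ℝ) ^ 2 * N - (q : ℝ) ^ 16|
      = ‖∑ v ∈ univ.erase 0, T v‖ := by rw [← hcount, Complex.norm_real, Real.norm_eq_abs]
    _ ≤ ∑ v ∈ univ.erase 0, ‖T v‖ := norm_sum_le _ _
    _ ≤ ∑ v ∈ univ.erase 0, B v := sum_le_sum fun v hv =>
        norm_prod_monomialSum_le_of_ne_zero hq hψ h (ne_of_mem_erase hv)
    _ ≤ ∑ v, B v := sum_le_sum_of_subset_of_nonneg (subset_univ _) fun _ _ _ => by positivity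
    _ = #{v : F × F | ∃ i, (c i, d i) ≠ 0 ∧ v.1 * c i + v.2 * d i = 0} * (16 * (q : ℝ) ^ 14) +
          q ^ 2 * (64 * (q : ℝ) ^ 13) := by
        rw [sum_add_distrib, ← sum_filter, sum_const, sum_const, card_univ, Fintype.card_prod]
        simp [q, sq]
    _ ≤ (16 * q) * (16 * (q : ℝ) ^ 14) + q ^ 2 * (64 * (q : ℝ) ^ 13) := by
        gcongr
        exact_mod_cast (card_filter_exists_mul_add_mul_eq_zero_le c d).trans_eq (by simp [q])
    _ = 320 * (q : ℝ) ^ 15 := by ring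

end Estimate

end DiagonalForms

/-- Lower bound `ρ(p) ≥ p^{14} − C·p^{13}` for the number of solutions mod `p`
of the pair of diagonal cubic forms, when `p ≡ 1 (mod 3)` and the singular
locus is small. -/
theorem rho_p_lower_bound :
    ∃ C : ℝ, 0 < C ∧
      ∀ (p : ℕ) (c d : Fin 16 → ℤ),
        p.Prime → p % 3 = 1 →
        (∀ l m : ZMod p, ¬(l = 0 ∧ m = 0) →
          Nat.card {i : Fin 16 // l * (c i : ZMod p) + m * (d i : ZMod p) = 0} ≤ 11) →
        (p : ℝ) ^ 14 - C * (p : ℝ) ^ 13 ≤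
          (Nat.card {x : Fin 16 → ZMod p //
            (∑ i, (c i : ZMod p) * x i ^ 3) = 0 ∧
            (∑ i, (d i : ZMod p) * x i ^ 3) = 0} : ℝ) := by
  refine ⟨320, by norm_num, fun p c d hp hp3 hcd => ?_⟩
  have := Fact.mk hp
  have hq : 3 ∣ Fintype.card (ZMod p) - 1 := by rw [ZMod.card]; omega
  have h : ∀ v : ZMod p × ZMod p, v ≠ 0 → #{i | v.1 * (c i : ZMod p) + v.2 * d i = 0} ≤ 11 :=
    fun v hv => by
      simpa [Nat.card_eq_fintype_card, Fintype.card_subtype] using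
        hcd v.1 v.2 fun h0 => hv (Prod.ext h0.1 h0.2)
  have hest := DiagonalForms.abs_card_sq_mul_card_sub_pow_le hq _ _ h
  rw [ZMod.card] at hest
  rw [Nat.card_eq_fintype_card, Fintype.card_subtype]
  refine le_of_mul_le_mul_left ?_ (by have := hp.pos; positivity : (0 : ℝ) < p ^ 2)
  linarith [(abs_le.mp hest).1]
end

section
/- Let p be a prime with p ≠ 3, let n ≥ 1 be an integer, and let c_i, c_j, d_i, d_j, λ, μ, x_i, x_j be integers satisfying c_ix_i³ + c_jx_j³ ≡ λ (mod pⁿ) and d_ix_i³ + d_jx_j³ ≡ μ (mod pⁿ), and suppose that x_i·x_j·(c_id_j − c_jd_i) ≢ 0 (mod p). Then there exist integers y_i, y_j with c_iy_i³ + c_jy_j³ ≡ λ (mod p^{n+1}), d_iy_i³ + d_jy_j³ ≡ μ (mod p^{n+1}), y_i ≡ x_i (mod p) and y_j ≡ x_j (mod p). -/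
/-- Hensel-type lifting for a pair of binary diagonal cubic congruences at a
prime `p ≠ 3`. -/
theorem hensel_lift_ne_three (p : ℕ) (hp : p.Prime) (hp3 : p ≠ 3)
    (n : ℕ) (hn : 1 ≤ n)
    (ci cj di dj lam mu xi xj : ℤ)
    (h1 : ci * xi ^ 3 + cj * xj ^ 3 ≡ lam [ZMOD (p : ℤ) ^ n])
    (h2 : di * xi ^ 3 + dj * xj ^ 3 ≡ mu [ZMOD (p : ℤ) ^ n])
    (hnd : ¬ (p : ℤ) ∣ xi * xj * (ci * dj - cj * di)) :
    ∃ yi yj : ℤ,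
      ci * yi ^ 3 + cj * yj ^ 3 ≡ lam [ZMOD (p : ℤ) ^ (n + 1)] ∧
      di * yi ^ 3 + dj * yj ^ 3 ≡ mu [ZMOD (p : ℤ) ^ (n + 1)] ∧
      yi ≡ xi [ZMOD (p : ℤ)] ∧
      yj ≡ xj [ZMOD (p : ℤ)] := by
  obtain ⟨m, rfl⟩ : ∃ m, n = m + 1 := ⟨n - 1, (Nat.succ_pred_eq_of_pos hn).symm⟩
  set q : ℤ := (p : ℤ) with hq
  have hpI : Prime q := Nat.prime_iff_prime_int.mp hp
  have hp3' : ¬ q ∣ 3 := by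
    intro h
    rw [hq] at h
    have h' : p ∣ 3 := by exact_mod_cast h
    exact hp3 ((Nat.prime_dvd_prime_iff_eq hp Nat.prime_three).mp h')
  have hD : ¬ q ∣ 9 * xi ^ 2 * xj ^ 2 * (ci * dj - cj * di) := by
    intro h
    have h' : q ∣ 3 * (3 * ((xi * xj * (ci * dj - cj * di)) * (xi * xj))) := by
      convert h using 1; ring
    rcases hpI.dvd_mul.mp h' with h3 | h'
    · exact hp3' h3
    rcases hpI.dvd_mul.mp h' with h3 | h'
    · exact hp3' h3
    rcases hpI.dvd_mul.mp h' with hd | hxx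
    · exact hnd hd
    · exact hnd (hxx.mul_right _)
  have hcop : IsCoprime q (9 * xi ^ 2 * xj ^ 2 * (ci * dj - cj * di)) :=
    hpI.coprime_iff_not_dvd.mpr hD
  obtain ⟨u, e, hue⟩ := hcop
  obtain ⟨A, hA⟩ := h1.dvd
  obtain ⟨B, hB⟩ := h2.dvd
  set D : ℤ := 9 * xi ^ 2 * xj ^ 2 * (ci * dj - cj * di) with hDdef
  set ti : ℤ := e * (3 * dj * xj ^ 2 * A - 3 * cj * xj ^ 2 * B) with hti
  set tj : ℤ := e * (3 * ci * xi ^ 2 * B - 3 * di * xi ^ 2 * A) with htj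
  refine ⟨xi + q ^ (m + 1) * ti, xj + q ^ (m + 1) * tj, ?_, ?_, ?_, ?_⟩
  · rw [Int.modEq_iff_dvd]
    refine ⟨A * u - q ^ m * (3 * ci * xi * ti ^ 2 + 3 * cj * xj * tj ^ 2 +
      q ^ (m + 1) * (ci * ti ^ 3 + cj * tj ^ 3)), ?_⟩
    rw [hti, htj]
    linear_combination hA - q ^ (m + 1) * A * hue
  · rw [Int.modEq_iff_dvd]
    refine ⟨B * u - q ^ m * (3 * di * xi * ti ^ 2 + 3 * dj * xj * tj ^ 2 +
      q ^ (m + 1) * (di * ti ^ 3 + dj * tj ^ 3)), ?_⟩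
    rw [hti, htj]
    linear_combination hB - q ^ (m + 1) * B * hue
  · rw [Int.modEq_iff_dvd]
    exact ⟨-(q ^ m * ti), by ring⟩
  · rw [Int.modEq_iff_dvd]
    exact ⟨-(q ^ m * tj), by ring⟩
end

section
/- Let n ≥ 2 be an integer, and let c_i, c_j, d_i, d_j, λ, μ, x_i, x_j be integers satisfying c_ix_i³ + c_jx_j³ ≡ λ (mod 3ⁿ) and d_ix_i³ + d_jx_j³ ≡ μ (mod 3ⁿ), and suppose that x_i·x_j·(c_id_j − c_jd_i) ≢ 0 (mod 3). Then there exist integers y_i, y_j with c_iy_i³ + c_jy_j³ ≡ λ (mod 3^{n+1}), d_iy_i³ + d_jy_j³ ≡ μ (mod 3^{n+1}), y_i ≡ x_i (mod 3) and y_j ≡ x_j (mod 3). -/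
/-- Hensel-type lifting for a pair of binary diagonal cubic congruences at the
prime `3`, starting from level `n ≥ 2`. -/
theorem hensel_lift_three (n : ℕ) (hn : 2 ≤ n)
    (ci cj di dj lam mu xi xj : ℤ)
    (h1 : ci * xi ^ 3 + cj * xj ^ 3 ≡ lam [ZMOD (3 : ℤ) ^ n])
    (h2 : di * xi ^ 3 + dj * xj ^ 3 ≡ mu [ZMOD (3 : ℤ) ^ n])
    (hnd : ¬ (3 : ℤ) ∣ xi * xj * (ci * dj - cj * di)) :
    ∃ yi yj : ℤ,
      ci * yi ^ 3 + cj * yj ^ 3 ≡ lam [ZMOD (3 : ℤ) ^ (n + 1)] ∧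
      di * yi ^ 3 + dj * yj ^ 3 ≡ mu [ZMOD (3 : ℤ) ^ (n + 1)] ∧
      yi ≡ xi [ZMOD (3 : ℤ)] ∧
      yj ≡ xj [ZMOD (3 : ℤ)] := by
  obtain ⟨m, rfl⟩ : ∃ m, n = m + 2 := ⟨n - 2, by omega⟩
  have hxi : ¬ (3:ℤ) ∣ xi := fun h => hnd (dvd_mul_of_dvd_left (dvd_mul_of_dvd_left h xj) _)
  have hxj : ¬ (3:ℤ) ∣ xj := fun h => hnd (dvd_mul_of_dvd_left (dvd_mul_of_dvd_right h xi) _)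
  have hDd : ¬ (3:ℤ) ∣ (ci*dj - cj*di) := fun h => hnd (dvd_mul_of_dvd_right h _)
  obtain ⟨a, ha⟩ := h1.dvd
  obtain ⟨b, hb⟩ := h2.dvd
  set E : ℤ := ci*dj - cj*di with hE
  set ti : ℤ := E*(a*dj - b*cj) with hti
  set tj : ℤ := E*(b*ci - a*di) with htj
  have hsq : ∀ x : ZMod 3, x ≠ 0 → x^2 = 1 := by decide
  have hxi2 : ((xi : ZMod 3))^2 = 1 :=
    hsq _ (fun h => hxi (by exact_mod_cast (ZMod.intCast_zmod_eq_zero_iff_dvd _ 3).mp h))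
  have hxj2 : ((xj : ZMod 3))^2 = 1 :=
    hsq _ (fun h => hxj (by exact_mod_cast (ZMod.intCast_zmod_eq_zero_iff_dvd _ 3).mp h))
  have hE2 : ((E : ZMod 3))^2 = 1 :=
    hsq _ (fun h => hDd (by exact_mod_cast (ZMod.intCast_zmod_eq_zero_iff_dvd _ 3).mp h))
  push_cast [hE] at hE2
  have key1 : (3:ℤ) ∣ (ci*xi^2*ti + cj*xj^2*tj - a) := by
    have h3 := (ZMod.intCast_zmod_eq_zero_iff_dvd (ci*xi^2*ti + cj*xj^2*tj - a) 3).mp ?_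
    · exact_mod_cast h3
    push_cast [hti, htj, hE]
    linear_combination ((ci:ZMod 3)*((ci:ZMod 3)*dj - cj*di)*((a:ZMod 3)*dj - b*cj)) * hxi2
      + ((cj:ZMod 3)*((ci:ZMod 3)*dj - cj*di)*((b:ZMod 3)*ci - a*di)) * hxj2
      + (a : ZMod 3) * hE2
  have key2 : (3:ℤ) ∣ (di*xi^2*ti + dj*xj^2*tj - b) := by
    have h3 := (ZMod.intCast_zmod_eq_zero_iff_dvd (di*xi^2*ti + dj*xj^2*tj - b) 3).mp ?_
    · exact_mod_cast h3
    push_cast [hti, htj, hE]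
    linear_combination ((di:ZMod 3)*((ci:ZMod 3)*dj - cj*di)*((a:ZMod 3)*dj - b*cj)) * hxi2
      + ((dj:ZMod 3)*((ci:ZMod 3)*dj - cj*di)*((b:ZMod 3)*ci - a*di)) * hxj2
      + (b : ZMod 3) * hE2
  obtain ⟨u, hu⟩ := key1
  obtain ⟨v, hv⟩ := key2
  refine ⟨xi + 3^(m+1)*ti, xj + 3^(m+1)*tj, ?_, ?_, ?_, ?_⟩
  · rw [Int.modEq_iff_dvd]
    exact ⟨-u - 3^m*(ci*xi*ti^2 + cj*xj*tj^2) - 3^(2*m)*(ci*ti^3 + cj*tj^3),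
      by linear_combination ha - 3^(m+2)*hu⟩
  · rw [Int.modEq_iff_dvd]
    exact ⟨-v - 3^m*(di*xi*ti^2 + dj*xj*tj^2) - 3^(2*m)*(di*ti^3 + dj*tj^3),
      by linear_combination hb - 3^(m+2)*hv⟩
  · rw [Int.modEq_iff_dvd]
    exact ⟨-(3^m*ti), by ring⟩
  · rw [Int.modEq_iff_dvd]
    exact ⟨-(3^m*tj), by ring⟩
end

section
/- Let p be a prime. For a pair of vectors (c,d) ∈ ((ℤ/pℤ)^{16})², let D(c,d) = { [c_i : d_i] ∈ ℙ¹(𝔽_p) : 1 ≤ i ≤ 16, (c_i, d_i) ≠ (0,0) } be the set of projective directions of the nonzero columns. Then: (a) the number of pairs (c,d) with |D(c,d)| ≤ 1 equals p^{17} + p^{16} − p; and (b) the number of pairs (c,d) with |D(c,d)| = 2 equals (p(p+1)/2) · ((2p−1)^{16} − 2·p^{16} + 1). -/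
/-- The set of projective directions in `ℙ¹(𝔽_p)` of the nonzero columns of the
pair `(c, d)`. -/
def directions (p : ℕ) [Fact p.Prime] (c d : Fin 16 → ZMod p) :
    Set (Projectivization (ZMod p) (ZMod p × ZMod p)) :=
  {x | ∃ i : Fin 16, ∃ h : ((c i, d i) : ZMod p × ZMod p) ≠ 0,
    x = Projectivization.mk (ZMod p) (c i, d i) h}

/-!
A vector lies in the affine cone over a set `S` of directions iff it is zero or its direction is
in `S`; over `𝔽_q` this cone has `1 + |S|(q - 1)` vectors, so exactly `(1 + |S|(q - 1))^n`
families of `n` vectors have all their directions in `S`. That number is the sum, over the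
subsets `T ⊆ S`, of the number of families whose direction set is exactly `T`; solving these
relations for `|S| = 0, 1, 2` gives `1`, `q^n - 1` and `(2q - 1)^n - 2q^n + 1`, and the theorem
follows from `|ℙ¹(𝔽_p)| = p + 1` by summing over the direction sets of size at most one,
resp. exactly two.
-/

open Finset
open scoped LinearAlgebra.Projectivization

lemma Finset.sum_powerset_singleton {α β : Type*} [AddCommMonoid β] (a : α) (g : Finset α → β) :
    ∑ t ∈ ({a} : Finset α).powerset, g t = g ∅ + g {a} := by
  classical
  rw [← insert_empty, sum_powerset_insert (notMem_empty a), powerset_empty, sum_singleton,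
    sum_singleton]

namespace Projectivization

variable (K : Type*) {V ι : Type*} [Field K] [AddCommGroup V] [Module K V]

open Classical in
noncomputable def directionFinset [Fintype ι] (f : ι → V) : Finset (ℙ K V) :=
  univ.image fun i : {i // f i ≠ 0} => mk K (f i) i.2

def affineCone (S : Set (ℙ K V)) : Set V := {v | ∀ h : v ≠ 0, mk K v h ∈ S}

variable {K}

lemma mem_directionFinset [Fintype ι] {f : ι → V} {x : ℙ K V} :
    x ∈ directionFinset K f ↔ ∃ i, ∃ h : f i ≠ 0, mk K (f i) h = x := by
  simp [directionFinset]

lemma directionFinset_subset_iff [Fintype ι] {f : ι → V} {S : Set (ℙ K V)} :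
    ↑(directionFinset K f) ⊆ S ↔ ∀ i, f i ∈ affineCone K S := by
  simp only [Set.subset_def, Finset.mem_coe, mem_directionFinset, affineCone]
  grind

lemma card_mk'_preimage (S : Finset (ℙ K V)) :
    Nat.card (mk' K ⁻¹' (S : Set (ℙ K V))) = #S * (Nat.card K - 1) := by
  rw [Nat.card_congr ((nonZeroEquivProjectivizationProdUnits K V).subtypeEquiv
      (p := (· ∈ mk' K ⁻¹' (S : Set (ℙ K V)))) (q := fun pu => pu.1 ∈ S) fun _ => Iff.rfl),
    Nat.card_congr Equiv.prodSubtypeFstEquivSubtypeProd, Nat.card_prod, Nat.card_units,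
    Nat.card_eq_finsetCard]

lemma affineCone_eq_insert_zero_image (S : Set (ℙ K V)) :
    affineCone K S = insert 0 (Subtype.val '' (mk' K ⁻¹' S)) := by
  ext v
  by_cases hv : v = 0
  · simp [hv, affineCone]
  · simp [affineCone, hv, mk'_eq_mk]

lemma card_affineCone [Finite V] (S : Finset (ℙ K V)) :
    Nat.card (affineCone K (S : Set (ℙ K V))) = #S * (Nat.card K - 1) + 1 := by
  rw [affineCone_eq_insert_zero_image, Nat.card_coe_set_eq, Set.ncard_insert_of_notMem (by simp),
    Set.ncard_image_of_injective _ Subtype.val_injective, ← Nat.card_coe_set_eq, card_mk'_preimage]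

lemma card_directionFinset_subset [Fintype ι] [Finite V] (S : Finset (ℙ K V)) :
    Nat.card {f : ι → V // directionFinset K f ⊆ S} =
      (#S * (Nat.card K - 1) + 1) ^ Fintype.card ι := by
  rw [Nat.card_congr ((Equiv.subtypeEquivRight fun f => by
      rw [← Finset.coe_subset, directionFinset_subset_iff]).trans Equiv.subtypePiEquivPi),
    Nat.card_pi, prod_const, card_affineCone, card_univ]

lemma card_directionFinset_mem [Fintype ι] [Finite V] (𝒯 : Finset (Finset (ℙ K V))) :
    Nat.card {f : ι → V // directionFinset K f ∈ 𝒯} =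
      ∑ T ∈ 𝒯, Nat.card {f : ι → V // directionFinset K f = T} := by
  classical
  have := Fintype.ofFinite V
  simp only [Nat.card_eq_fintype_card, Fintype.card_subtype]
  exact (sum_card_fiberwise_eq_card_filter _ _ _).symm

lemma card_directionFinset_subset_eq_sum_powerset [Fintype ι] [Finite V] (S : Finset (ℙ K V)) :
    Nat.card {f : ι → V // directionFinset K f ⊆ S} =
      ∑ T ∈ S.powerset, Nat.card {f : ι → V // directionFinset K f = T} := by
  simp_rw [← card_directionFinset_mem, mem_powerset]

lemma card_directionFinset_eq_empty [Fintype ι] [Finite V] :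
    Nat.card {f : ι → V // directionFinset K f = ∅} = 1 := by
  simpa using (card_directionFinset_subset_eq_sum_powerset (ι := ι) (∅ : Finset (ℙ K V))).symm.trans
      (card_directionFinset_subset ∅)

variable [Fintype ι] [Finite K] [Finite V]

open scoped Classical

lemma card_directionFinset_eq_singleton (x : ℙ K V) :
    (Nat.card {f : ι → V // directionFinset K f = {x}} : ℤ) =
      Nat.card K ^ Fintype.card ι - 1 := by
  have h := (card_directionFinset_subset_eq_sum_powerset (ι := ι) {x}).symm.trans
    (card_directionFinset_subset {x})
  have hK : 1 ≤ Nat.card K := Nat.card_pos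
  rw [sum_powerset_singleton, card_directionFinset_eq_empty, card_singleton, one_mul,
    Nat.sub_add_cancel hK] at h
  lia

lemma card_directionFinset_eq_pair {x y : ℙ K V} (hxy : x ≠ y) :
    (Nat.card {f : ι → V // directionFinset K f = {x, y}} : ℤ) =
      (2 * Nat.card K - 1) ^ Fintype.card ι - 2 * Nat.card K ^ Fintype.card ι + 1 := by
  have h := (card_directionFinset_subset_eq_sum_powerset (ι := ι) {x, y}).symm.trans
    (card_directionFinset_subset {x, y})
  have hK : 1 ≤ Nat.card K := Nat.card_pos
  rw [sum_powerset_insert (by simpa using hxy), sum_powerset_singleton, sum_powerset_singleton,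
    insert_empty, card_directionFinset_eq_empty, card_pair hxy] at h
  have hx := card_directionFinset_eq_singleton (ι := ι) x
  have hy := card_directionFinset_eq_singleton (ι := ι) y
  zify [hK] at h
  linear_combination h - hx - hy

lemma card_directionFinset_card_le_one :
    (Nat.card {f : ι → V // #(directionFinset K f) ≤ 1} : ℤ) =
      1 + Nat.card (ℙ K V) * (Nat.card K ^ Fintype.card ι - 1) := by
  have := Fintype.ofFinite (ℙ K V)
  have hsmall (T : Finset (ℙ K V)) :
      #T ≤ 1 ↔ T ∈ insert ∅ (univ.map ⟨singleton, singleton_injective⟩) := by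
    simp [Nat.le_one_iff_eq_zero_or_eq_one, card_eq_one, eq_comm]
  rw [Nat.card_congr (Equiv.subtypeEquivRight fun f => hsmall _), card_directionFinset_mem,
    sum_insert (by simp), sum_map, card_directionFinset_eq_empty]
  push_cast
  simp only [Function.Embedding.coeFn_mk, card_directionFinset_eq_singleton, sum_const, card_univ,
    nsmul_eq_mul, Nat.card_eq_fintype_card]

lemma card_directionFinset_card_eq_two :
    (Nat.card {f : ι → V // #(directionFinset K f) = 2} : ℤ) =
      (Nat.card (ℙ K V)).choose 2 *
        ((2 * Nat.card K - 1) ^ Fintype.card ι - 2 * Nat.card K ^ Fintype.card ι + 1) := by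
  have := Fintype.ofFinite (ℙ K V)
  rw [Nat.card_congr (Equiv.subtypeEquivRight fun f => mem_powersetCard_univ.symm),
    card_directionFinset_mem]
  push_cast
  rw [sum_congr rfl fun T hT => ?_, sum_const, card_powersetCard, card_univ,
    Nat.card_eq_fintype_card, nsmul_eq_mul]
  obtain ⟨x, y, hxy, rfl⟩ := card_eq_two.1 (mem_powersetCard_univ.1 hT)
  exact card_directionFinset_eq_pair hxy

end Projectivization

open Projectivization in
lemma directions_eq_coe_directionFinset (p : ℕ) [Fact p.Prime] (c d : Fin 16 → ZMod p) :
    directions p c d = directionFinset (ZMod p) fun i => (c i, d i) := by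
  ext x
  simp only [directions, Set.mem_ofPred_eq, Finset.mem_coe, mem_directionFinset, eq_comm]

open Projectivization in
/-- Exact counts of pairs `(c, d)` whose columns determine at most one
direction, resp. exactly two directions, in `ℙ¹(𝔽_p)`. -/
theorem direction_counts (p : ℕ) [Fact p.Prime] :
    ((Nat.card {cd : (Fin 16 → ZMod p) × (Fin 16 → ZMod p) //
        (directions p cd.1 cd.2).ncard ≤ 1} : ℤ) =
      (p : ℤ) ^ 17 + (p : ℤ) ^ 16 - (p : ℤ)) ∧
    ((Nat.card {cd : (Fin 16 → ZMod p) × (Fin 16 → ZMod p) //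
        (directions p cd.1 cd.2).ncard = 2} : ℤ) =
      ((p : ℤ) * ((p : ℤ) + 1) / 2) *
        ((2 * (p : ℤ) - 1) ^ 16 - 2 * (p : ℤ) ^ 16 + 1)) := by
  have hcount (P : ℕ → Prop) :
      Nat.card {cd : (Fin 16 → ZMod p) × (Fin 16 → ZMod p) // P (directions p cd.1 cd.2).ncard} =
        Nat.card {f : Fin 16 → ZMod p × ZMod p // P #(directionFinset (ZMod p) f)} :=
    Nat.card_congr ((Equiv.arrowProdEquivProdArrow _ _ _).symm.subtypeEquiv fun cd => by
      rw [directions_eq_coe_directionFinset, Set.ncard_coe_finset]; rfl)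
  have hP : Nat.card (ℙ (ZMod p) (ZMod p × ZMod p)) = p + 1 := by
    rw [card_of_finrank_two _ _ (by simp), Nat.card_zmod]
  have hchoose : (p + 1).choose 2 = p * (p + 1) / 2 := by
    rw [Nat.choose_two_right, Nat.add_sub_cancel, Nat.mul_comm]
  rw [hcount (· ≤ 1), hcount (· = 2), card_directionFinset_card_le_one,
    card_directionFinset_card_eq_two, hP, Nat.card_zmod, Fintype.card_fin, hchoose,
    Int.natCast_div]
  constructor <;> push_cast <;> ring
end
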